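/- arXiv:math/0109027 — 7 statements merged into one kernel-verified Lean document; each statement's English description precedes it below -/
import Mathlib

section
/- Every cofinal subset e of a countable limit ordinal γ of order type ω is contained in d(γ, f) for some f : ω → ω. -/
open Ordinal Set

/-- A ladder system: for every countable limit ordinal `δ`, `C δ : ℕ → δ` is
strictly increasing with cofinal range. -/
def LadderSystem (C : Ordinal → ℕ → Ordinal) : Prop :=
  ∀ δ : Ordinal, Order.IsSuccLimit δ → δ.card ≤ Cardinal.aleph0 →
    StrictMono (C δ) ∧ (∀ n, C δ n < δ) ∧ ∀ ξ < δ, ∃ n, ξ ≤ C δ n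

/-- One step of the walk towards `ξ`: from a successor ordinal step to its
predecessor, from a limit ordinal `a` step to the least element of `ran (C a)`
that is `≥ ξ`. -/
def WalkStep (C : Ordinal → ℕ → Ordinal) (ξ a b : Ordinal) : Prop :=
  (¬ Order.IsSuccLimit a ∧ b + 1 = a) ∨
  (Order.IsSuccLimit a ∧ ∃ n : ℕ, b = C a n ∧ ξ ≤ C a n ∧ ∀ m < n, C a m < ξ)

/-- `l` is the walk from `η` down to `ξ`. -/
def IsWalk (C : Ordinal → ℕ → Ordinal) (ξ η : Ordinal) (l : List Ordinal) : Prop :=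
  l.head? = some η ∧ l.getLast? = some ξ ∧
  l.Chain' (fun a b => a ≠ ξ ∧ WalkStep C ξ a b)

/-- The set of ladder indices used at limit steps of the walk `l`. -/
def WalkIndices (C : Ordinal → ℕ → Ordinal) (l : List Ordinal) : Set ℕ :=
  { n | ∃ i : ℕ, ∃ a b : Ordinal,
      l[i]? = some a ∧ l[i + 1]? = some b ∧ Order.IsSuccLimit a ∧ b = C a n }

/-- The norm `n(ξ, η)` of the walk from `η` to `ξ`: the maximal ladder index
used at a limit step of the walk. -/
noncomputable def walkNorm (C : Ordinal → ℕ → Ordinal) (ξ η : Ordinal) : ℕ :=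
  sSup { n | ∃ l : List Ordinal, IsWalk C ξ η l ∧ n ∈ WalkIndices C l }

/-- The set `d(γ, f)` of all `ξ < γ` such that `n(ξ, C γ k) < f k`, where
`C γ k` is the least element of `ran (C γ)` that is `≥ ξ`. -/
noncomputable def dSet (C : Ordinal → ℕ → Ordinal) (γ : Ordinal) (f : ℕ → ℕ) :
    Set Ordinal :=
  { ξ | ξ < γ ∧ ∃ k : ℕ, ξ ≤ C γ k ∧ (∀ m < k, C γ m < ξ) ∧
      walkNorm C ξ (C γ k) < f k }

/-- Every cofinal subset `e` of a countable limit ordinal `γ` of order type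
`ω` is contained in `d(γ, f)` for some `f : ℕ → ℕ`. -/
theorem cofinal_omega_subset_dSet
    (C : Ordinal → ℕ → Ordinal) (hC : LadderSystem C)
    (γ : Ordinal) (hlim : Order.IsSuccLimit γ) (hcount : γ.card ≤ Cardinal.aleph0)
    (e : Set Ordinal) (he : ∀ x ∈ e, x < γ) (hinf : e.Infinite)
    (hunb : ∀ ξ < γ, ∃ x ∈ e, ξ < x)
    (hot : ∀ ξ < γ, (e ∩ Set.Iio ξ).Finite) :
    ∃ f : ℕ → ℕ, e ⊆ dSet C γ f := by
  obtain ⟨hmono, hlt, hcof⟩ := hC γ hlim hcount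
  have hfin : ∀ k : ℕ, (e ∩ Set.Iic (C γ k)).Finite := by
    intro k
    apply (hot (C γ k + 1) (hlim.succ_lt (hlt k))).subset
    rintro x ⟨hx, hx2⟩
    refine ⟨hx, ?_⟩
    simpa [Order.lt_add_one_iff] using hx2
  refine ⟨fun k => ((hfin k).toFinset.sup fun ξ => walkNorm C ξ (C γ k)) + 1, ?_⟩
  intro ξ hξ
  have hξγ := he ξ hξ
  have hex : ∃ k, ξ ≤ C γ k := hcof ξ hξγ
  refine ⟨hξγ, Nat.find hex, Nat.find_spec hex, ?_, ?_⟩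
  · intro m hm
    exact lt_of_not_ge (Nat.find_min hex hm)
  · have hmem : ξ ∈ (hfin (Nat.find hex)).toFinset :=
      (hfin (Nat.find hex)).mem_toFinset.mpr ⟨hξ, Nat.find_spec hex⟩
    exact Nat.lt_succ_of_le (Finset.le_sup (f := fun ζ => walkNorm C ζ (C γ (Nat.find hex))) hmem)
end

section
/- Assume for each limit ordinal γ ≤ β and f ∈ ω^ω a set d(γ,f) ⊆ γ of order type at most ω is given such that every cofinal subset of γ of order type ω is contained in some d(γ,f). If {f_α : α < 𝔟} is an unbounded family of strictly increasing functions witnessing that property in the strong form of the walk construction (for every infinite e ⊆ β there is α with e ∩ d(sup e', f_α) infinite for suitable limits), then every closed subset e of β of order type β has infinite intersection with some d(β, f_α); i.e., the sets A_{d(β,f_α)} cover the space of closed copies of β inside β. -/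
open Ordinal Set

/-- `F ⊆ ω^ω` is unbounded in the eventual domination order: no single
`g : ℕ → ℕ` eventually dominates all members of `F`. -/
def UnboundedFamily (F : Set (ℕ → ℕ)) : Prop :=
  ∀ g : ℕ → ℕ, ∃ f ∈ F, {n : ℕ | g n < f n}.Infinite

/-- The bounding number `𝔟`: the least cardinality of an unbounded family in
`(ω^ω, ≤*)`. -/
noncomputable def boundingNumber : Cardinal :=
  sInf { c : Cardinal | ∃ F : Set (ℕ → ℕ), Cardinal.mk F = c ∧ UnboundedFamily F }
universe u

/-- The order type of a set of ordinals. -/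
noncomputable def otype (s : Set Ordinal.{u}) : Ordinal.{u+1} :=
  Ordinal.type (Subrel ((· < ·) : Ordinal.{u} → Ordinal.{u} → Prop) (· ∈ s))

/-- `s` has order type `δ`. -/
def HasOrderType (s : Set Ordinal.{u}) (δ : Ordinal.{u}) : Prop :=
  otype s = Ordinal.lift.{u+1} δ

/-- `s` is closed in `δ`: every limit ordinal `lam < δ` in which `s` is
unbounded belongs to `s`. -/
def ClosedIn (s : Set Ordinal) (δ : Ordinal) : Prop :=
  ∀ lam : Ordinal, lam < δ → Order.IsSuccLimit lam →
    (∀ ξ < lam, ∃ x ∈ s, ξ < x ∧ x < lam) → lam ∈ s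

/-- Covering half of `cov(club_β) ≤ 𝔟`: if `{f i}` is an unbounded family of
size `𝔟` of strictly increasing functions, then every closed subset of the
ε-number `β` of order type `β` has infinite intersection with some
`d(β, f i)`; i.e. the sets `A_{d(β, f i)}` cover `Club_β`. -/
theorem covering_club_ideal
    (C : Ordinal → ℕ → Ordinal) (hC : LadderSystem C)
    (β : Ordinal) (hlim : Order.IsSuccLimit β) (hcount : β.card ≤ Cardinal.aleph0)
    (hω : Ordinal.omega0 < β) (hexp : ∀ ξ < β, ∀ η < β, ξ ^ η < β)
    (ι : Type) (hcard : Cardinal.mk ι = boundingNumber)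
    (f : ι → ℕ → ℕ) (hmono : ∀ i, StrictMono (f i))
    (hunb : ∀ g : ℕ → ℕ, ∃ i : ι, {n : ℕ | g n < f i n}.Infinite) :
    ∀ e : Set Ordinal, (∀ x ∈ e, x < β) → ClosedIn e β → HasOrderType e β →
      ∃ i : ι, (e ∩ dSet C β (f i)).Infinite := by
  classical
  intro e he _hclosed htype
  obtain ⟨hD1, hD2, hD3⟩ := hC β hlim hcount
  set D := C β with hD
  -- e is unbounded in β
  have hub : ∀ ξ < β, ∃ x ∈ e, ξ < x := by
    by_contra h
    push_neg at h
    obtain ⟨ξ, hξ, hb⟩ := h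
    have hsub : e ⊆ {o : Ordinal | o < ξ + 1} := fun x hx =>
      lt_of_le_of_lt (hb x hx) (Order.lt_succ ξ)
    have hle : Ordinal.lift (β) ≤ Ordinal.lift (ξ + 1) := by
      calc Ordinal.lift β = otype e := htype.symm
        _ ≤ Ordinal.type (Subrel ((· < ·) : Ordinal → Ordinal → Prop) (· ∈ {o : Ordinal | o < ξ + 1})) :=
          RelEmbedding.ordinal_type_le
            ⟨⟨fun x => ⟨x.1, hsub x.2⟩, by
                intro a b hab
                have h' := congrArg Subtype.val hab
                exact Subtype.ext h'⟩,
              Iff.rfl⟩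
        _ = Ordinal.lift (ξ + 1) := Ordinal.type_lt_Iio (ξ + 1)
    have : β ≤ ξ + 1 := Ordinal.lift_le.mp hle
    exact absurd (lt_of_le_of_lt this (hlim.succ_lt hξ)) (lt_irrefl β)
  -- choose points of e above each ladder point
  choose x hxe hxgt using fun k => hub (D k) (hD2 k)
  -- minimal ladder index above each chosen point
  have hfind : ∀ k : ℕ, ∃ m : ℕ, x k ≤ D m := fun k => hD3 (x k) (he _ (hxe k))
  let K : ℕ → ℕ := fun k => Nat.find (hfind k)
  have hK1 : ∀ k, x k ≤ D (K k) := fun k => Nat.find_spec (hfind k)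
  have hK2 : ∀ k, ∀ m < K k, D m < x k := fun k m hm =>
    not_le.mp (Nat.find_min (hfind k) hm)
  have hKk : ∀ k, k < K k := by
    intro k
    by_contra h
    push_neg at h
    exact absurd (le_trans (hK1 k) (hD1.monotone h)) (not_le.mpr (hxgt k))
  -- apply unboundedness of the family
  obtain ⟨i, hi⟩ := hunb fun k => walkNorm C (x k) (D (K k))
  refine ⟨i, ?_⟩
  set s := e ∩ dSet C β (f i) with hs
  have hmem : ∀ k, walkNorm C (x k) (D (K k)) < f i k → x k ∈ s := by
    intro k hk
    refine ⟨hxe k, he _ (hxe k), K k, hK1 k, hK2 k, ?_⟩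
    exact lt_of_lt_of_le hk ((hmono i).monotone (le_of_lt (hKk k)))
  -- s is unbounded in β
  have claim : ∀ ξ, ξ < β → ∃ z ∈ s, ξ < z := by
    intro ξ hξ
    obtain ⟨k0, hk0⟩ := hD3 ξ hξ
    obtain ⟨k, hk, hk0k⟩ := hi.exists_gt k0
    exact ⟨x k, hmem k hk, lt_of_le_of_lt (le_trans hk0 (hD1.monotone (le_of_lt hk0k))) (hxgt k)⟩
  choose! z hz1 hz2 using claim
  have hzβ : ∀ ξ, ξ < β → z ξ < β := fun ξ h => he _ (hz1 ξ h).1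
  have hβ0 : (0 : Ordinal) < β := hlim.pos
  have hseq : ∀ n : ℕ, z^[n] (z 0) < β ∧ z^[n] (z 0) ∈ s := by
    intro n
    induction n with
    | zero => exact ⟨hzβ 0 hβ0, hz1 0 hβ0⟩
    | succ n ih =>
      rw [Function.iterate_succ_apply']
      exact ⟨hzβ _ ih.1, hz1 _ ih.1⟩
  have hsm : StrictMono fun n : ℕ => z^[n] (z 0) := by
    apply strictMono_nat_of_lt_succ
    intro n
    rw [Function.iterate_succ_apply']
    exact hz2 _ (hseq n).1
  exact Set.infinite_of_injective_forall_mem hsm.injective fun n => (hseq n).2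
end

section
/- If 𝔟 = ℵ₁, then the weak club guessing principle WCG holds: there is a family of ℵ₁ many subsets of ω₁, each of order type ω, such that every club (closed unbounded) subset of ω₁ has infinite intersection with at least one member of the family. -/
open Set

open Cardinal Ordinal

universe u v

/-- A subset of `Iio γ` that is unbounded in `γ > 0` is infinite. -/
lemma aux_infinite_of_unbounded {γ : Ordinal.{u}} {s : Set Ordinal.{u}} (h0 : 0 < γ)
    (hsub : ∀ x ∈ s, x < γ) (hunb : ∀ x < γ, ∃ β ∈ s, x < β) : s.Infinite := by
  by_contra hinf
  rw [Set.not_infinite] at hinf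
  obtain ⟨β0, hβ0, _⟩ := hunb 0 h0
  have hm : sSup s ∈ s := Set.Nonempty.csSup_mem ⟨β0, hβ0⟩ hinf
  obtain ⟨β, hβ, hlt⟩ := hunb _ (hsub _ hm)
  exact absurd (le_csSup hinf.bddAbove hβ) (not_le.2 hlt)

/-- An infinite set of ordinals all of whose initial segments are finite has
order type `ω`. -/
lemma aux_hasOrderType_omega0 {s : Set Ordinal.{u}} (hinf : s.Infinite)
    (hfin : ∀ y ∈ s, (s ∩ Iio y).Finite) : HasOrderType s Ordinal.omega0 := by
  unfold HasOrderType otype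
  rw [lift_omega0]
  set r := Subrel ((· < ·) : Ordinal.{u} → Ordinal.{u} → Prop) (· ∈ s) with hr
  apply le_antisymm
  · by_contra hlt
    push_neg at hlt
    obtain ⟨x, hx⟩ := typein_surj r hlt
    have hcard : #{ y // r y x } = ℵ₀ := by
      rw [← card_typein, hx, card_omega0]
    have hfin' : (s ∩ Iio (x : Ordinal)).Finite := hfin _ x.2
    haveI := hfin'.to_subtype
    have hfin'' : Finite {y // r y x} := by
      refine Finite.of_injective (fun y => (⟨y.1.1, y.1.2, y.2⟩ : ↥(s ∩ Iio (x : Ordinal)))) ?_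
      intro a b hab
      apply Subtype.ext; apply Subtype.ext
      simpa using congrArg Subtype.val hab
    exact absurd hcard (Cardinal.mk_lt_aleph0_iff.2 hfin'').ne
  · by_contra hlt
    push_neg at hlt
    obtain ⟨n, hn⟩ := Ordinal.lt_omega0.1 hlt
    have hcard : #(↥s) = (n : Cardinal) := by
      have := congrArg Ordinal.card hn
      rwa [card_type, Ordinal.card_nat] at this
    haveI : Infinite (↥s) := hinf.to_subtype
    have h := Cardinal.aleph0_le_mk (↥s)
    rw [hcard] at h
    exact absurd h (not_le.2 (Cardinal.nat_lt_aleph0 n))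

/-- Key construction: for every (countable limit) ordinal `γ`, a family
`D f` of subsets of `γ`, each infinite with finite initial segments, such that
for every set `A` unbounded in `γ` there is `g` so that any `f` infinitely
often above `g` gives `A ∩ D f` infinite. -/
lemma aux_key (γ : Ordinal.{u}) :
    ∃ D : (ℕ → ℕ) → Set Ordinal.{u},
      (∀ f, (∀ x ∈ D f, x < (Cardinal.aleph 1).ord) ∧ (D f).Infinite ∧
        ∀ y ∈ D f, (D f ∩ Iio y).Finite) ∧
      (γ < (Cardinal.aleph 1).ord → Order.IsSuccLimit γ →
        ∀ A : Set Ordinal.{u}, (∀ a ∈ A, a < γ) → (∀ x < γ, ∃ a ∈ A, x < a) →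
          ∃ g : ℕ → ℕ, ∀ f, {m : ℕ | g m < f m}.Infinite → (A ∩ D f).Infinite) := by
  classical
  have hωκ : (omega0 : Ordinal.{u}) < (Cardinal.aleph 1).ord := by
    rw [← Cardinal.ord_aleph0]
    exact Cardinal.ord_lt_ord.2 aleph0_lt_aleph_one
  by_cases hγ : γ < (Cardinal.aleph 1).ord ∧ Order.IsSuccLimit γ
  · obtain ⟨hκ, hlim⟩ := hγ
    -- a bijective enumeration of `Iio γ`
    have hcard : #(↥(Iio γ)) = (ℵ₀ : Cardinal.{u+1}) := by
      rw [Cardinal.mk_Iio_ordinal]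
      have h1 : γ.card ≤ ℵ₀ := by
        have := Cardinal.lt_ord.1 hκ
        rw [← succ_aleph0] at this
        exact Order.lt_succ_iff.1 this
      have h2 : (ℵ₀ : Cardinal.{u}) ≤ γ.card := by
        have := Ordinal.card_le_card (omega0_le_of_isSuccLimit hlim)
        rwa [card_omega0] at this
      rw [le_antisymm h1 h2, lift_aleph0]
    have hne : Nonempty (↥(Iio γ) ≃ ULift.{u+1} ℕ) := by
      apply Cardinal.eq.1
      rw [hcard, mk_uLift, mk_nat, lift_aleph0]
    obtain ⟨ev⟩ := hne
    have hb'lt : ∀ n : ℕ, ((ev.symm (ULift.up n)).1 : Ordinal.{u}) < γ :=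
      fun n => (ev.symm (ULift.up n)).2
    set b' : ℕ → Ordinal.{u} := fun n => (ev.symm (ULift.up n)).1 with hb'
    have hb'surj : ∀ x, x < γ → ∃ n, b' n = x := by
      intro x hx
      exact ⟨(ev ⟨x, hx⟩).down, congrArg Subtype.val (ev.symm_apply_apply ⟨x, hx⟩)⟩
    set c : ℕ → Ordinal.{u} := fun n => (Finset.range (n + 1)).sup b' with hc
    have hbc : ∀ n, b' n ≤ c n := fun n =>
      Finset.le_sup (Finset.self_mem_range_succ n)
    have hcmono : Monotone c := fun m n h =>
      Finset.sup_mono (Finset.range_subset_range.2 (by omega))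
    have hclt : ∀ n, c n < γ := by
      intro n
      apply (Finset.sup_lt_iff (by simpa using hlim.pos)).2
      intro k _
      exact hb'lt k
    have hccof : ∀ x, x < γ → ∃ n, x ≤ c n := by
      intro x hx
      obtain ⟨n, hn⟩ := hb'surj x hx
      exact ⟨n, hn ▸ hbc n⟩
    refine ⟨fun f => Set.range c ∪ { β | ∃ n k, k ≤ f n ∧ b' k = β ∧ c n < β }, ?_, ?_⟩
    · intro f
      have hsubγ : ∀ x ∈ Set.range c ∪ { β | ∃ n k, k ≤ f n ∧ b' k = β ∧ c n < β }, x < γ := by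
        rintro x (⟨n, rfl⟩ | ⟨n, k, _, rfl, _⟩)
        · exact hclt n
        · exact hb'lt k
      refine ⟨fun x hx => (hsubγ x hx).trans hκ, ?_, ?_⟩
      · refine aux_infinite_of_unbounded hlim.pos hsubγ ?_
        intro x hx
        obtain ⟨n, hn⟩ := hccof _ (hlim.succ_lt hx)
        exact ⟨c n, Or.inl ⟨n, rfl⟩, lt_of_lt_of_le (Order.lt_succ x) hn⟩
      · intro y hy
        obtain ⟨K, hK⟩ := hccof y (hsubγ y hy)
        have hsub : (Set.range c ∪ { β | ∃ n k, k ≤ f n ∧ b' k = β ∧ c n < β }) ∩ Iio y ⊆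
            (c '' (Set.Iio K)) ∪ (b' '' (Set.Iic ((Finset.range K).sup f))) := by
          rintro β ⟨hβD, hβy⟩
          have hnK : ∀ n : ℕ, c n < y → n < K := by
            intro n hn
            by_contra hnot
            exact absurd (hK.trans (hcmono (by omega))) (not_le.2 hn)
          rcases hβD with ⟨n, rfl⟩ | ⟨n, k, hk, rfl, hcn⟩
          · exact Or.inl ⟨n, hnK n hβy, rfl⟩
          · refine Or.inr ⟨k, ?_, rfl⟩
            have hnK' : n < K := hnK n (hcn.trans hβy)
            exact hk.trans (Finset.le_sup (Finset.mem_range.2 hnK'))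
        exact (((Set.finite_Iio K).image c).union ((Set.finite_Iic _).image b')).subset hsub
    · intro _ _ A hAsub hAunb
      have hch : ∀ m : ℕ, ∃ β, β ∈ A ∧ c m < β := by
        intro m
        obtain ⟨a, ha, hlt⟩ := hAunb (c m) (hclt m)
        exact ⟨a, ha, hlt⟩
      choose β hβA hβgt using hch
      choose ι hι using fun m => hb'surj (β m) (hAsub _ (hβA m))
      refine ⟨ι, fun f hS => ?_⟩
      refine aux_infinite_of_unbounded hlim.pos (fun x hx => hAsub x hx.1) ?_
      intro x hx
      obtain ⟨n, hn⟩ := hccof x hx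
      obtain ⟨m, hmS, hmn⟩ := hS.exists_gt n
      refine ⟨β m, ⟨hβA m, Or.inr ⟨m, ι m, le_of_lt hmS, hι m, hβgt m⟩⟩, ?_⟩
      exact lt_of_le_of_lt (hn.trans (hcmono (le_of_lt hmn))) (hβgt m)
  · -- fallback: the set of natural-number ordinals
    refine ⟨fun _ => Set.range (fun n : ℕ => (n : Ordinal.{u})), ?_, ?_⟩
    · intro _
      have hinj : Function.Injective (fun n : ℕ => (n : Ordinal.{u})) :=
        fun a b h => Nat.cast_inj.1 h
      refine ⟨?_, Set.infinite_range_of_injective hinj, ?_⟩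
      · rintro x ⟨n, rfl⟩
        exact (Ordinal.nat_lt_omega0 n).trans hωκ
      · rintro y ⟨m, rfl⟩
        have hss : Set.range (fun n : ℕ => (n : Ordinal.{u})) ∩ Iio ((m : ℕ) : Ordinal) ⊆
            (fun n : ℕ => (n : Ordinal.{u})) '' (Set.Iio m) := by
          rintro x ⟨⟨k, rfl⟩, hk⟩
          exact ⟨k, Nat.cast_lt.1 (show ((k : ℕ) : Ordinal.{u}) < m from hk), rfl⟩
        exact ((Set.finite_Iio m).image _).subset hss
    · intro h1 h2
      exact absurd ⟨h1, h2⟩ hγ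

/-- Main auxiliary result, with explicit universes. -/
theorem aux_main (hb : boundingNumber = Cardinal.aleph 1) :
    ∃ d : Ordinal.{u} → Set Ordinal.{v},
      (∀ α < (Cardinal.aleph 1).ord,
        (∀ x ∈ d α, x < (Cardinal.aleph 1).ord) ∧
          HasOrderType (d α) Ordinal.omega0) ∧
      ∀ e : Set Ordinal.{v}, (∀ x ∈ e, x < (Cardinal.aleph 1).ord) →
        ClosedIn e (Cardinal.aleph 1).ord →
        (∀ ξ < (Cardinal.aleph 1).ord, ∃ x ∈ e, ξ < x) →
        ∃ α < (Cardinal.aleph 1).ord, (e ∩ d α).Infinite := by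
  classical
  -- obtain an unbounded family of size ℵ₁
  have hSne : { c : Cardinal | ∃ F : Set (ℕ → ℕ), Cardinal.mk F = c ∧ UnboundedFamily F }.Nonempty := by
    refine ⟨#(↥(Set.univ : Set (ℕ → ℕ))), Set.univ, rfl, ?_⟩
    intro g
    refine ⟨fun n => g n + 1, Set.mem_univ _, ?_⟩
    have huniv : {n : ℕ | g n < g n + 1} = Set.univ := by
      ext n; simp [Nat.lt_succ_self]
    rw [huniv]
    exact Set.infinite_univ
  have hmem := csInf_mem hSne
  obtain ⟨F, hF, hFunb⟩ := hmem
  have hF1 : #(↥F) = Cardinal.aleph 1 := hF.trans hb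
  -- a pairing of `Iio ω₁` (at universe u) with `Iio ω₁ × F` (at universe v)
  have h1 : #(↥(Iio ((Cardinal.aleph 1).ord : Ordinal.{u}))) = (Cardinal.aleph 1 : Cardinal.{u+1}) := by
    rw [Cardinal.mk_Iio_ordinal, card_ord, lift_aleph, Ordinal.lift_one]
  have h1' : #(↥(Iio ((Cardinal.aleph 1).ord : Ordinal.{v}))) = (Cardinal.aleph 1 : Cardinal.{v+1}) := by
    rw [Cardinal.mk_Iio_ordinal, card_ord, lift_aleph, Ordinal.lift_one]
  have h2 : #(ULift.{v+1} (↥F)) = (Cardinal.aleph 1 : Cardinal.{v+1}) := by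
    rw [mk_uLift, hF1, lift_aleph, Ordinal.lift_one]
  have h3 : Cardinal.lift.{v+1} #(↥(Iio ((Cardinal.aleph 1).ord : Ordinal.{u}))) =
      Cardinal.lift.{u+1} #(↥(Iio ((Cardinal.aleph 1).ord : Ordinal.{v})) × ULift.{v+1} (↥F)) := by
    rw [h1, Cardinal.mk_prod, h1', h2]
    simp [Cardinal.lift_aleph, Cardinal.mul_eq_self (aleph0_le_aleph 1)]
  obtain ⟨E⟩ := Cardinal.lift_mk_eq'.1 h3
  choose D hD1 hD2 using aux_key.{v}
  refine ⟨fun α => if h : α < (Cardinal.aleph 1).ord then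
      D ((E ⟨α, h⟩).1 : Ordinal.{v}) (((E ⟨α, h⟩).2.down : ↥F) : ℕ → ℕ) else ∅, ?_, ?_⟩
  · intro α hα
    simp only [dif_pos hα]
    exact ⟨(hD1 _ _).1, aux_hasOrderType_omega0 (hD1 _ _).2.1 (hD1 _ _).2.2⟩
  · intro e hesub _ heunb
    have h0κ : (0 : Ordinal.{v}) < (Cardinal.aleph 1).ord := by
      rw [Cardinal.lt_ord, Ordinal.card_zero]
      exact aleph_pos 1
    -- build a strictly increasing ω-sequence in e
    have hstep : ∀ o : Ordinal.{v}, o < (Cardinal.aleph 1).ord → ∃ x, x ∈ e ∧ o < x := by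
      intro o ho
      obtain ⟨x, hx, h⟩ := heunb o ho
      exact ⟨x, hx, h⟩
    choose nxt hnxt1 hnxt2 using hstep
    let x : ℕ → {o : Ordinal.{v} // o ∈ e ∧ o < (Cardinal.aleph 1).ord} := fun n =>
      Nat.rec ⟨nxt 0 h0κ, hnxt1 0 h0κ, hesub _ (hnxt1 0 h0κ)⟩
        (fun _ p => ⟨nxt p.1 p.2.2, hnxt1 _ _, hesub _ (hnxt1 _ _)⟩) n
    have hxsucc : ∀ n, x (n + 1) =
        ⟨nxt (x n).1 (x n).2.2, hnxt1 _ _, hesub _ (hnxt1 _ _)⟩ := fun _ => rfl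
    have hxs : ∀ n, (x n).1 < (x (n + 1)).1 := by
      intro n
      rw [hxsucc n]
      exact hnxt2 (x n).1 (x n).2.2
    set γ : Ordinal.{v} := ⨆ n, (x n).1 with hγdef
    have hle : ∀ n, (x n).1 ≤ γ := by
      intro n
      rw [hγdef]
      exact Ordinal.le_iSup (fun k => (x k).1) n
    have hltγ : ∀ n, (x n).1 < γ := fun n =>
      lt_of_lt_of_le (hxs n) (hle (n + 1))
    have hγκ : γ < (Cardinal.aleph 1).ord := by
      rw [hγdef]
      apply iSup_lt_ord_lift
      · rw [mk_nat, lift_aleph0, Cardinal.isRegular_aleph_one.cof_eq]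
        exact aleph0_lt_aleph_one
      · exact fun n => (x n).2.2
    have hγlim : Order.IsSuccLimit γ := by
      rw [Ordinal.isSuccLimit_iff, Order.isSuccPrelimit_iff_succ_lt]
      constructor
      · intro h
        exact absurd (h ▸ hltγ 0 : (x 0).1 < 0) (not_lt_of_ge zero_le)
      · intro a ha
        rw [hγdef] at ha
        obtain ⟨n, hn⟩ := Ordinal.lt_iSup_iff.1 ha
        exact lt_of_le_of_lt (Order.succ_le_of_lt hn) (hltγ n)
    -- apply the key lemma to A = e ∩ Iio γ
    obtain ⟨g, hg⟩ := hD2 γ hγκ hγlim (e ∩ Iio γ) (fun a ha => ha.2)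
      (by
        intro ξ hξ
        rw [hγdef] at hξ
        obtain ⟨n, hn⟩ := Ordinal.lt_iSup_iff.1 hξ
        exact ⟨(x n).1, ⟨(x n).2.1, hltγ n⟩, hn⟩)
    obtain ⟨f, hfF, hfinf⟩ := hFunb g
    set α : ↥(Iio ((Cardinal.aleph 1).ord : Ordinal.{u})) :=
      E.symm (⟨γ, hγκ⟩, ULift.up ⟨f, hfF⟩) with hα
    have hα2 : α.1 < ((Cardinal.aleph 1).ord : Ordinal.{u}) := α.2
    refine ⟨α.1, hα2, ?_⟩
    simp only [dif_pos hα2]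
    have hEα : E ⟨α.1, hα2⟩ = (⟨γ, hγκ⟩, ULift.up ⟨f, hfF⟩) := by
      have h : (⟨α.1, hα2⟩ : ↥(Iio ((Cardinal.aleph 1).ord : Ordinal.{u}))) = α := rfl
      rw [h, hα, E.apply_symm_apply]
    rw [hEα]
    exact (hg f hfinf).mono (fun z hz => ⟨hz.1.1, hz.2⟩)

/-- If `𝔟 = ℵ₁` then the weak club guessing principle holds: there are `ℵ₁`
many subsets of `ω₁`, each of order type `ω`, such that every club subset of
`ω₁` has infinite intersection with one of them. -/
theorem weak_club_guessing_of_b_eq_aleph_one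
    (hb : boundingNumber = Cardinal.aleph 1) :
    ∃ d : Ordinal → Set Ordinal,
      (∀ α < (Cardinal.aleph 1).ord,
        (∀ x ∈ d α, x < (Cardinal.aleph 1).ord) ∧
          HasOrderType (d α) Ordinal.omega0) ∧
      ∀ e : Set Ordinal, (∀ x ∈ e, x < (Cardinal.aleph 1).ord) →
        ClosedIn e (Cardinal.aleph 1).ord →
        (∀ ξ < (Cardinal.aleph 1).ord, ∃ x ∈ e, ξ < x) →
        ∃ α < (Cardinal.aleph 1).ord, (e ∩ d α).Infinite := by
  exact aux_main hb
end

section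
/- If 𝔟 = ℵ₁ then there is a family of ℵ₁ subsets of ω₁ each of order type ω such that every infinite subset of ω₁ (not merely every club) has infinite intersection with some member of the family. -/
open Set

open Cardinal Ordinal

universe u

lemma exists_strictMono_mem {e : Set Ordinal.{u}} (he : e.Infinite) :
    ∃ x : ℕ → Ordinal.{u}, StrictMono x ∧ ∀ n, x n ∈ e := by
  let A : ℕ → Set Ordinal.{u} := fun n => Nat.rec e (fun _ s => s \ {sInf s}) n
  have hAinf : ∀ n, (A n).Infinite := by
    intro n; induction n with
    | zero => exact he
    | succ n ih => exact Set.Infinite.diff ih (Set.finite_singleton _)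
  have hmem : ∀ n, sInf (A n) ∈ A n := fun n => csInf_mem (hAinf n).nonempty
  have hsub : ∀ n, A n ⊆ e := by
    intro n; induction n with
    | zero => exact subset_rfl
    | succ n ih => exact (Set.diff_subset).trans ih
  refine ⟨fun n => sInf (A n), strictMono_nat_of_lt_succ ?_, fun n => hsub n (hmem n)⟩
  intro n
  have h1 : sInf (A (n+1)) ∈ A n \ {sInf (A n)} := hmem (n+1)
  exact lt_of_le_of_ne (csInf_le' h1.1) (Ne.symm h1.2)

lemma otype_omega {s : Set Ordinal.{u}} (hs : s.Infinite)
    (hfin : ∀ x ∈ s, (s ∩ Iio x).Finite) : HasOrderType s Ordinal.omega0 := by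
  classical
  unfold HasOrderType otype
  rw [Ordinal.lift_omega0]
  have hrank : ∀ x : s, ((s ∩ Iio (x : Ordinal)).Finite) := fun x => hfin x x.2
  set rank : s → ℕ := fun x => (hrank x).toFinset.card with hrankdef
  have hmono : ∀ a b : s, (a : Ordinal) < b → rank a < rank b := by
    intro a b hab
    have h1 : (hrank a).toFinset ⊆ (hrank b).toFinset := by
      intro y hy
      simp only [Set.Finite.mem_toFinset, Set.mem_inter_iff, Set.mem_Iio] at hy ⊢
      exact ⟨hy.1, hy.2.trans hab⟩
    have h2 : (a : Ordinal) ∈ (hrank b).toFinset := by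
      simp only [Set.Finite.mem_toFinset, Set.mem_inter_iff, Set.mem_Iio]
      exact ⟨a.2, hab⟩
    have h3 : (a : Ordinal) ∉ (hrank a).toFinset := by
      simp [Set.Finite.mem_toFinset]
    exact Finset.card_lt_card ⟨h1, fun hba => h3 (hba h2)⟩
  have hinj : Function.Injective rank := by
    intro a b hab
    rcases lt_trichotomy (a : Ordinal) b with h | h | h
    · exact absurd hab (Nat.ne_of_lt (hmono a b h))
    · exact Subtype.ext h
    · exact absurd hab.symm (Nat.ne_of_lt (hmono b a h))
  have hsurj : Function.Surjective rank := by
    have hdc : ∀ b : s, ∀ n < rank b, ∃ a : s, rank a = n := by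
      intro b n hn
      let el : {y // y ∈ (hrank b).toFinset} → s :=
        fun y => ⟨y.1, ((Set.Finite.mem_toFinset _).mp y.2).1⟩
      have helinj : Function.Injective el := by
        intro y z hyz
        have h' := congrArg Subtype.val hyz
        exact Subtype.ext h'
      let U : Finset ℕ := (hrank b).toFinset.attach.image (fun y => rank (el y))
      have hUcard : U.card = rank b := by
        have hi : Function.Injective (fun y => rank (el y)) := fun a b h => helinj (hinj h)
        rw [Finset.card_image_of_injective _ hi, Finset.card_attach]
      have hUsub : U ⊆ Finset.range (rank b) := by
        intro m hm
        obtain ⟨y, _, rfl⟩ := Finset.mem_image.mp hm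
        have : ((el y : s) : Ordinal) < (b : Ordinal) := by
          have := (Set.Finite.mem_toFinset _).mp y.2
          exact this.2
        exact Finset.mem_range.mpr (hmono _ b this)
      have hUeq : U = Finset.range (rank b) := by
        apply Finset.eq_of_subset_of_card_le hUsub
        rw [hUcard, Finset.card_range]
      have hnU : n ∈ U := by rw [hUeq]; exact Finset.mem_range.mpr hn
      obtain ⟨y, _, hy⟩ := Finset.mem_image.mp hnU
      exact ⟨el y, hy⟩
    intro n
    haveI : Infinite s := Set.infinite_coe_iff.mpr hs
    obtain ⟨m, hm, hnm⟩ := (Set.infinite_range_of_injective hinj).exists_gt n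
    obtain ⟨b, rfl⟩ := hm
    exact hdc b n hnm
  -- build the order isomorphism
  let e1 : s ≃ ℕ := Equiv.ofBijective rank ⟨hinj, hsurj⟩
  let iso : Subrel ((· < ·) : Ordinal.{u} → Ordinal.{u} → Prop) (· ∈ s) ≃r
      (ULift.down.{u+1,0} ⁻¹'o ((· < ·) : ℕ → ℕ → Prop)) := by
    refine ⟨e1.trans Equiv.ulift.symm, ?_⟩
    intro a b
    show rank a < rank b ↔ (a : Ordinal) < (b : Ordinal)
    constructor
    · intro h
      rcases lt_trichotomy (a : Ordinal) b with h' | h' | h'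
      · exact h'
      · exact absurd h (by rw [Subtype.ext h']; exact lt_irrefl _)
      · exact absurd (hmono b a h') (by omega)
    · exact hmono a b
  rw [Ordinal.type_eq.mpr ⟨iso⟩, Ordinal.type_uLift, Ordinal.type_nat_lt, Ordinal.lift_omega0]

-- injections chosen for each γ
lemma exists_inj (γ : Ordinal.{u}) :
    ∃ I : Ordinal.{u} → ℕ, γ < (Cardinal.aleph 1).ord → Set.InjOn I (Iio γ) := by
  classical
  by_cases h : γ < (Cardinal.aleph 1).ord
  · have h1 : #(↥(Iio γ)) ≤ ℵ₀ := by
      rw [Ordinal.mk_Iio_ordinal]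
      have h2 : γ.card ≤ ℵ₀ := by
        have := (Cardinal.lt_ord.mp h)
        rwa [← Cardinal.succ_aleph0, Order.lt_succ_iff] at this
      calc Cardinal.lift.{u+1} γ.card ≤ Cardinal.lift.{u+1} ℵ₀ := Cardinal.lift_le.mpr h2
        _ = ℵ₀ := Cardinal.lift_aleph0
    haveI : Countable (↥(Iio γ)) := Cardinal.mk_le_aleph0_iff.mp h1
    obtain ⟨f, hf⟩ := (countable_iff_exists_injective _).mp this
    refine ⟨fun ξ => if hξ : ξ ∈ Iio γ then f ⟨ξ, hξ⟩ else 0, fun _ => ?_⟩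
    intro a ha b hb hab
    have hab' : (if hξ : a ∈ Iio γ then f ⟨a, hξ⟩ else 0) =
        (if hξ : b ∈ Iio γ then f ⟨b, hξ⟩ else 0) := hab
    rw [dif_pos ha, dif_pos hb] at hab'
    exact congrArg Subtype.val (hf hab')
  · exact ⟨fun _ => 0, fun h' => absurd h' h⟩

-- cofinal monotone sequences for each countable limit γ
lemma exists_cof (γ : Ordinal.{u}) :
    ∃ c : ℕ → Ordinal.{u}, γ < (Cardinal.aleph 1).ord → Order.IsSuccLimit γ →
      (Monotone c ∧ (∀ n, c n < γ) ∧ ∀ ξ < γ, ∃ n, ξ < c n) := by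
  classical
  by_cases h : γ < (Cardinal.aleph 1).ord ∧ Order.IsSuccLimit γ
  · obtain ⟨h, hlim⟩ := h
    have h1 : #(↥(Iio γ)) ≤ ℵ₀ := by
      rw [Ordinal.mk_Iio_ordinal]
      have h2 : γ.card ≤ ℵ₀ := by
        have := (Cardinal.lt_ord.mp h)
        rwa [← Cardinal.succ_aleph0, Order.lt_succ_iff] at this
      calc Cardinal.lift.{u+1} γ.card ≤ Cardinal.lift.{u+1} ℵ₀ := Cardinal.lift_le.mpr h2
        _ = ℵ₀ := Cardinal.lift_aleph0
    haveI : Countable (↥(Iio γ)) := Cardinal.mk_le_aleph0_iff.mp h1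
    have hpos : (0 : Ordinal) < γ := pos_iff_ne_zero.mpr (Ordinal.isSuccLimit_iff.mp hlim).1
    haveI : Nonempty (↥(Iio γ)) := ⟨⟨0, hpos⟩⟩
    obtain ⟨uu, huu⟩ := exists_surjective_nat (↥(Iio γ))
    refine ⟨fun n => ((Finset.range (n+1)).sup fun m => ((uu m : Ordinal))) + 1,
      fun _ _ => ⟨?_, ?_, ?_⟩⟩
    · intro a b hab
      exact add_le_add_left (Finset.sup_mono (Finset.range_subset_range.mpr (by omega))) 1
    · intro n
      have hsup : ((Finset.range (n+1)).sup fun m => ((uu m : Ordinal))) < γ := by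
        rw [Finset.sup_lt_iff (by rw [Ordinal.bot_eq_zero]; exact hpos)]
        exact fun m _ => (uu m).2
      show ((Finset.range (n+1)).sup fun m => ((uu m : Ordinal))) + 1 < γ
      rw [Ordinal.add_one_eq_succ]
      exact hlim.succ_lt hsup
    · intro ξ hξ
      obtain ⟨m, hm⟩ := huu ⟨ξ, hξ⟩
      refine ⟨m, ?_⟩
      have h3 : ((uu m : Ordinal)) ≤ (Finset.range (m+1)).sup fun k => ((uu k : Ordinal)) :=
        Finset.le_sup (f := fun k => ((uu k : Ordinal))) (Finset.self_mem_range_succ m)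
      have h4 : ξ = ((uu m : Ordinal)) := by rw [hm]
      show ξ < ((Finset.range (m+1)).sup fun k => ((uu k : Ordinal))) + 1
      rw [h4, Ordinal.add_one_eq_succ]
      exact lt_of_le_of_lt h3 (Order.lt_succ _)
  · exact ⟨fun _ => 0, fun h1 h2 => absurd ⟨h1, h2⟩ h⟩

-- the pairing cardinality fact
lemma pair_card : #(↥(Iio (Cardinal.aleph 1).ord) × ↥(Iio (Cardinal.aleph 1).ord : Set Ordinal.{0}))
    = #(↥(Iio ((Cardinal.aleph 1).ord : Ordinal.{u}))) := by
  rw [Cardinal.mk_prod, Ordinal.mk_Iio_ordinal, Ordinal.mk_Iio_ordinal, Cardinal.card_ord,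
    Cardinal.card_ord, Cardinal.lift_lift, Cardinal.lift_lift, Cardinal.lift_aleph,
    Cardinal.lift_aleph, Ordinal.lift_one, Ordinal.lift_one,
    Cardinal.mul_eq_self (aleph0_le_aleph 1)]

lemma key_props (γ : Ordinal.{u}) (I : Ordinal.{u} → ℕ) (hIinj : Set.InjOn I (Iio γ))
    (c : ℕ → Ordinal.{u}) (hcm : Monotone c) (hclt : ∀ n, c n < γ)
    (hccof : ∀ ξ < γ, ∃ n, ξ < c n) (f : ℕ → ℕ) :
    (∀ x ∈ Set.range c ∪ {ξ | ξ < γ ∧ I ξ ≤ f (sInf {n | ξ < c n})}, x < γ) ∧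
    (Set.range c ∪ {ξ | ξ < γ ∧ I ξ ≤ f (sInf {n | ξ < c n})}).Infinite ∧
    ∀ x ∈ Set.range c ∪ {ξ | ξ < γ ∧ I ξ ≤ f (sInf {n | ξ < c n})},
      ((Set.range c ∪ {ξ | ξ < γ ∧ I ξ ≤ f (sInf {n | ξ < c n})}) ∩ Iio x).Finite := by
  classical
  set S := Set.range c ∪ {ξ | ξ < γ ∧ I ξ ≤ f (sInf {n | ξ < c n})} with hS
  have hsub : ∀ x ∈ S, x < γ := by
    rintro x (⟨n, rfl⟩ | hx)
    · exact hclt n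
    · exact hx.1
  refine ⟨hsub, ?_, ?_⟩
  · -- infinite
    refine Set.Infinite.mono Set.subset_union_left ?_
    intro hfin
    have hne : hfin.toFinset.Nonempty := ⟨c 0, by simp [Set.Finite.mem_toFinset]⟩
    set b := hfin.toFinset.max' hne with hbdef
    have hbmem : b ∈ Set.range c := by
      have := hfin.toFinset.max'_mem hne
      rwa [Set.Finite.mem_toFinset] at this
    have hbγ : b < γ := by obtain ⟨k, hk⟩ := hbmem; rw [← hk]; exact hclt k
    obtain ⟨n, hn⟩ := hccof b hbγ
    have : c n ≤ b := hfin.toFinset.le_max' _ (by simp [Set.Finite.mem_toFinset])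
    exact absurd hn (not_lt.mpr this)
  · -- finite initial segments
    intro x hx
    obtain ⟨n, hn⟩ := hccof x (hsub x hx)
    have hsubset : S ∩ Iio x ⊆ S ∩ Iio (c n) :=
      Set.inter_subset_inter_right _ (Set.Iio_subset_Iio hn.le)
    refine Set.Finite.subset ?_ hsubset
    have h1 : (Set.range c ∩ Iio (c n)).Finite := by
      refine Set.Finite.subset ((Set.finite_Iio n).image c) ?_
      rintro y ⟨⟨m, rfl⟩, hy⟩
      refine ⟨m, ?_, rfl⟩
      by_contra hmn
      exact absurd hy (not_lt.mpr (hcm (not_lt.mp hmn)))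
    have h2 : ({ξ | ξ < γ ∧ I ξ ≤ f (sInf {n | ξ < c n})} ∩ Iio (c n)).Finite := by
      set B := (Finset.range (n+1)).sup f with hB
      have hsub2 : {ξ | ξ < γ ∧ I ξ ≤ f (sInf {n | ξ < c n})} ∩ Iio (c n) ⊆
          {ξ ∈ Iio γ | I ξ ≤ B} := by
        rintro ξ ⟨⟨h1', h2'⟩, h3'⟩
        refine ⟨h1', le_trans h2' ?_⟩
        have hm : sInf {m | ξ < c m} ≤ n := Nat.sInf_le h3'
        exact Finset.le_sup (Finset.mem_range.mpr (by omega))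
      refine Set.Finite.subset ?_ hsub2
      refine Set.Finite.of_finite_image ?_ (hIinj.mono (Set.sep_subset _ _))
      refine Set.Finite.subset (Set.finite_Iic B) ?_
      rintro m ⟨ξ, ⟨_, hξ2⟩, rfl⟩
      exact hξ2
    refine Set.Finite.subset (h1.union h2) ?_
    rintro y ⟨hyS, hy2⟩
    rcases hyS with hy1 | hy1
    · exact Or.inl ⟨hy1, hy2⟩
    · exact Or.inr ⟨hy1, hy2⟩

-- N default set props
lemma nat_range_props :
    (∀ x ∈ Set.range (fun n : ℕ => (n : Ordinal.{u})), x < (Cardinal.aleph 1).ord) ∧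
    (Set.range (fun n : ℕ => (n : Ordinal.{u}))).Infinite ∧
    ∀ x ∈ Set.range (fun n : ℕ => (n : Ordinal.{u})),
      ((Set.range (fun n : ℕ => (n : Ordinal.{u}))) ∩ Iio x).Finite := by
  have homega : (Ordinal.omega0 : Ordinal.{u}) < (Cardinal.aleph 1).ord := by
    rw [← Cardinal.ord_aleph0]
    exact Cardinal.ord_lt_ord.mpr (by simpa using Cardinal.aleph0_lt_aleph_one)
  have hinj : Function.Injective (fun n : ℕ => (n : Ordinal.{u})) := by
    intro a b h
    have h' : (a : Ordinal.{u}) = b := h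
    exact_mod_cast h'
  refine ⟨?_, Set.infinite_range_of_injective hinj, ?_⟩
  · rintro x ⟨n, rfl⟩
    exact lt_trans (Ordinal.nat_lt_omega0 n) homega
  · rintro x ⟨m, rfl⟩
    refine Set.Finite.subset ((Set.finite_Iio m).image (fun n : ℕ => (n : Ordinal.{u}))) ?_
    rintro y ⟨⟨k, rfl⟩, hy⟩
    have hy' : (k : Ordinal.{u}) < m := hy
    exact ⟨k, by exact_mod_cast hy', rfl⟩

-- the unbounded monotone family
lemma exists_family (hb : boundingNumber = Cardinal.aleph 1) :
    ∃ fd : ↥(Iio ((Cardinal.aleph 1).ord : Ordinal.{0})) → ℕ → ℕ,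
      (∀ δ, Monotone (fd δ)) ∧ ∀ g : ℕ → ℕ, ∃ δ, {n | g n < fd δ n}.Infinite := by
  have hne : Set.Nonempty {c : Cardinal | ∃ F : Set (ℕ → ℕ), Cardinal.mk F = c ∧ UnboundedFamily F} :=
    ⟨_, Set.univ, rfl, fun g => ⟨fun n => g n + 1, Set.mem_univ _, by
      simpa using Set.infinite_univ (α := ℕ)⟩⟩
  have hmem := csInf_mem hne
  rw [show sInf {c : Cardinal | ∃ F : Set (ℕ → ℕ), Cardinal.mk F = c ∧ UnboundedFamily F}
      = boundingNumber from rfl, hb] at hmem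
  obtain ⟨F, hFcard, hFub⟩ := hmem
  have hmk : Cardinal.lift.{1,0} #↥F = Cardinal.lift.{0,1} #(↥(Iio ((Cardinal.aleph 1).ord : Ordinal.{0}))) := by
    rw [hFcard, Ordinal.mk_Iio_ordinal, Cardinal.card_ord]
    simp
  obtain ⟨eqv⟩ := Cardinal.lift_mk_eq'.mp hmk
  refine ⟨fun δ n => (Finset.range (n+1)).sup (fun m => (eqv.symm δ : ℕ → ℕ) m), ?_, ?_⟩
  · intro δ a b hab
    exact Finset.sup_mono (Finset.range_subset_range.mpr (by omega))
  · intro g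
    obtain ⟨f, hfF, hinf⟩ := hFub g
    refine ⟨eqv ⟨f, hfF⟩, hinf.mono ?_⟩
    intro n hn
    simp only [Set.mem_setOf_eq] at hn ⊢
    refine lt_of_lt_of_le hn ?_
    have : ((eqv.symm (eqv ⟨f, hfF⟩) : ↥F) : ℕ → ℕ) = f := by rw [Equiv.symm_apply_apply]
    rw [this]
    exact Finset.le_sup (f := fun m => f m) (Finset.self_mem_range_succ n)

lemma pair_equiv.{w1, w2} : Nonempty (↥(Iio ((Cardinal.aleph 1).ord : Ordinal.{w1})) ≃
    (↥(Iio ((Cardinal.aleph 1).ord : Ordinal.{w2})) × ↥(Iio ((Cardinal.aleph 1).ord : Ordinal.{0})))) := by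
  refine Cardinal.lift_mk_eq'.mp ?_
  rw [Cardinal.mk_prod, Ordinal.mk_Iio_ordinal, Ordinal.mk_Iio_ordinal, Ordinal.mk_Iio_ordinal,
    Cardinal.card_ord, Cardinal.card_ord, Cardinal.card_ord, Cardinal.lift_mul]
  simp only [Cardinal.lift_lift, Cardinal.lift_aleph, Ordinal.lift_one]
  rw [Cardinal.mul_eq_self (aleph0_le_aleph 1)]


theorem main_aux.{v, w}
    (hb : boundingNumber = Cardinal.aleph 1) :
    ∃ d : Ordinal.{v} → Set Ordinal.{w},
      (∀ α < (Cardinal.aleph 1).ord,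
        (∀ x ∈ d α, x < (Cardinal.aleph 1).ord) ∧
          HasOrderType (d α) Ordinal.omega0) ∧
      ∀ e : Set Ordinal, (∀ x ∈ e, x < (Cardinal.aleph 1).ord) →
        e.Infinite →
        ∃ α < (Cardinal.aleph 1).ord, (e ∩ d α).Infinite := by
  classical
  choose I hI using exists_inj
  choose C hC using exists_cof
  obtain ⟨fd, hfdmono, hfdub⟩ := exists_family hb
  obtain ⟨P⟩ := pair_equiv.{v, w}
  refine ⟨fun α =>
    if h : α < (Cardinal.aleph 1).ord then
      if _hl : Order.IsSuccLimit ((P ⟨α, h⟩).1 : Ordinal) then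
        Set.range (C ((P ⟨α, h⟩).1 : Ordinal)) ∪
          {ξ | ξ < ((P ⟨α, h⟩).1 : Ordinal) ∧
            I ((P ⟨α, h⟩).1 : Ordinal) ξ ≤
              fd (P ⟨α, h⟩).2 (sInf {n | ξ < C ((P ⟨α, h⟩).1 : Ordinal) n})}
      else Set.range (fun n : ℕ => (n : Ordinal))
    else Set.range (fun n : ℕ => (n : Ordinal)), ?_, ?_⟩
  · intro α hα
    simp only [dif_pos hα]
    by_cases hl : Order.IsSuccLimit ((P ⟨α, hα⟩).1 : Ordinal)
    · rw [dif_pos hl]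
      have hγlt : ((P ⟨α, hα⟩).1 : Ordinal) < (Cardinal.aleph 1).ord := (P ⟨α, hα⟩).1.2
      obtain ⟨h1, h2, h3⟩ := key_props ((P ⟨α, hα⟩).1 : Ordinal)
        (I ((P ⟨α, hα⟩).1 : Ordinal)) (hI _ hγlt)
        (C ((P ⟨α, hα⟩).1 : Ordinal)) (hC _ hγlt hl).1 (hC _ hγlt hl).2.1 (hC _ hγlt hl).2.2
        (fd (P ⟨α, hα⟩).2)
      exact ⟨fun x hx => lt_trans (h1 x hx) hγlt, otype_omega h2 h3⟩
    · rw [dif_neg hl]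
      obtain ⟨h1, h2, h3⟩ := nat_range_props
      exact ⟨h1, otype_omega h2 h3⟩
  · intro e he hinf
    obtain ⟨x, hxmono, hxe⟩ := exists_strictMono_mem hinf
    set γ := Ordinal.lsub x with hγdef
    have hγlt : γ < (Cardinal.aleph 1).ord := by
      refine Ordinal.lsub_lt_ord_lift ?_ (fun n => he _ (hxe n))
      rw [Cardinal.isRegular_aleph_one.cof_eq]
      simpa using Cardinal.aleph0_lt_aleph_one
    have hxγ : ∀ k, x k < γ := fun k => Ordinal.lt_lsub x k
    have hγlim : Order.IsSuccLimit γ := by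
      rw [Ordinal.isSuccLimit_iff]
      refine ⟨?_, Order.isSuccPrelimit_iff_succ_lt.mpr ?_⟩
      · have hpos : (0:Ordinal) < γ := lt_of_le_of_lt zero_le (hxγ 0)
        exact pos_iff_ne_zero.mp hpos
      · intro a ha
        obtain ⟨i, hi⟩ := Ordinal.lt_lsub_iff.mp ha
        have h2 : a < x (i+1) := lt_of_le_of_lt hi (hxmono (Nat.lt_succ_self i))
        exact lt_of_le_of_lt (Order.succ_le_of_lt h2) (hxγ (i+1))
    obtain ⟨hCm, hClt, hCcof⟩ := hC γ hγlt hγlim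
    set mI := fun ξ => sInf {m | ξ < C γ m} with hmIdef
    have hmI : ∀ ξ, ξ < γ → ξ < C γ (mI ξ) := by
      intro ξ hξ
      have h0 : mI ξ ∈ {m | ξ < C γ m} := Nat.sInf_mem (by
        obtain ⟨n, hn⟩ := hCcof ξ hξ; exact ⟨n, hn⟩)
      exact h0
    have hmIub : ∀ n, ∃ k, n ≤ mI (x k) := by
      intro n
      obtain ⟨k, hk⟩ := Ordinal.lt_lsub_iff.mp (hClt n)
      refine ⟨k, ?_⟩
      by_contra hcon
      push_neg at hcon
      have h5 : C γ (mI (x k)) ≤ C γ n := hCm hcon.le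
      exact absurd hk (not_le.mpr (lt_of_lt_of_le (hmI (x k) (hxγ k)) h5))
    set K : ℕ → ℕ := fun n => sInf {k | n ≤ mI (x k)} with hKdef
    have hK : ∀ n, n ≤ mI (x (K n)) := fun n => Nat.sInf_mem (hmIub n)
    obtain ⟨δ, hδ⟩ := hfdub (fun n => I γ (x (K n)))
    set α0 := P.symm (⟨γ, hγlt⟩, δ) with hα0
    have hα0lt : (α0 : Ordinal) < (Cardinal.aleph 1).ord := α0.2
    refine ⟨(α0 : Ordinal), hα0lt, ?_⟩
    have hPα : P ⟨(α0 : Ordinal), hα0lt⟩ = (⟨γ, hγlt⟩, δ) := by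
      rw [show (⟨(α0 : Ordinal), hα0lt⟩ : ↥(Iio (Cardinal.aleph 1).ord)) = α0 from rfl, hα0]
      exact P.apply_symm_apply _
    have hD : (fun α : Ordinal =>
        if h : α < (Cardinal.aleph 1).ord then
          if _hl : Order.IsSuccLimit ((P ⟨α, h⟩).1 : Ordinal) then
            Set.range (C ((P ⟨α, h⟩).1 : Ordinal)) ∪
              {ξ | ξ < ((P ⟨α, h⟩).1 : Ordinal) ∧
                I ((P ⟨α, h⟩).1 : Ordinal) ξ ≤
                  fd (P ⟨α, h⟩).2 (sInf {n | ξ < C ((P ⟨α, h⟩).1 : Ordinal) n})}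
          else Set.range (fun n : ℕ => (n : Ordinal))
        else Set.range (fun n : ℕ => (n : Ordinal))) (α0 : Ordinal)
        = Set.range (C γ) ∪ {ξ | ξ < γ ∧ I γ ξ ≤ fd δ (sInf {n | ξ < C γ n})} := by
      simp only [dif_pos hα0lt, hPα]
      rw [dif_pos hγlim]
    rw [hD]
    set T := (fun n => x (K n)) '' {n | (fun n => I γ (x (K n))) n < fd δ n} with hT
    have hTsub : T ⊆ e ∩ (Set.range (C γ) ∪ {ξ | ξ < γ ∧ I γ ξ ≤ fd δ (sInf {n | ξ < C γ n})}) := by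
      rintro y ⟨n, hn, rfl⟩
      refine ⟨hxe _, Or.inr ⟨hxγ _, ?_⟩⟩
      refine le_trans (le_of_lt hn) (hfdmono δ (hK n))
    have hTinf : T.Infinite := by
      intro hfin
      have hcov : {n | (fun n => I γ (x (K n))) n < fd δ n} ⊆ ⋃ y ∈ T, {n | x (K n) = y} := by
        intro n hn
        exact Set.mem_biUnion ⟨n, hn, rfl⟩ rfl
      have hfib : ∀ y ∈ T, {n | x (K n) = y}.Finite := by
        rintro y ⟨n0, _, rfl⟩
        refine Set.Finite.subset (Set.finite_Iic (mI (x (K n0)))) ?_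
        intro n hn
        have hKn : K n = K n0 := hxmono.injective hn
        calc n ≤ mI (x (K n)) := hK n
          _ = mI (x (K n0)) := by rw [hKn]
      exact hδ ((hfin.biUnion hfib).subset hcov)
    exact hTinf.mono hTsub



/-- If `𝔟 = ℵ₁` then there are `ℵ₁` many subsets of `ω₁`, each of order type
`ω`, such that every infinite subset of `ω₁` (not merely every club) has
infinite intersection with one of them. -/
theorem strong_guessing_of_b_eq_aleph_one
    (hb : boundingNumber = Cardinal.aleph 1) :
    ∃ d : Ordinal → Set Ordinal,
      (∀ α < (Cardinal.aleph 1).ord,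
        (∀ x ∈ d α, x < (Cardinal.aleph 1).ord) ∧
          HasOrderType (d α) Ordinal.omega0) ∧
      ∀ e : Set Ordinal, (∀ x ∈ e, x < (Cardinal.aleph 1).ord) →
        e.Infinite →
        ∃ α < (Cardinal.aleph 1).ord, (e ∩ d α).Infinite :=
  main_aux hb
end

section
/- Let β be an ε-number (countable limit ordinal closed under ordinal exponentiation). The ideal club_β, σ-generated by the sets A_d = { e ∈ Club_β : e ∩ d infinite } for d ⊆ β of order type ω, is proper: Club_β itself is not a countable union of sets A_{d_n}; equivalently, for every countable family {d_n : n ∈ ω} of subsets of β of order type ω there exists a closed e ⊆ β of order type β with e ∩ d_n finite for every n. -/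
open Ordinal

namespace ClubAux

open Set

set_option linter.unusedSectionVars false
set_option linter.unusedVariables false

/-- absolute closedness -/
def AClosed (s : Set Ordinal) : Prop :=
  ∀ lam : Ordinal, Order.IsSuccLimit lam → (∀ ξ < lam, ∃ x ∈ s, ξ < x ∧ x < lam) → lam ∈ s

def Short (c : Set Ordinal) : Prop := ∀ x ∈ c, {y ∈ c | y < x}.Finite


lemma otype_mono {s t : Set Ordinal.{u}} (h : s ⊆ t) : otype s ≤ otype t := by
  rw [otype, otype, type_le_iff']
  exact ⟨⟨⟨fun x => ⟨x.1, h x.2⟩, fun a b hab => Subtype.ext (by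
    simpa using congrArg Subtype.val hab)⟩, Iff.rfl⟩⟩

lemma otype_Iio (β : Ordinal.{u}) : otype (Set.Iio β) = Ordinal.lift.{u+1} β := by
  rw [otype, ← typein_ordinal β]
  rfl

lemma le_otype {γ : Ordinal.{u}} {E : Set Ordinal.{u}} {f : Ordinal.{u} → Ordinal.{u}}
    (hmono : StrictMonoOn f (Set.Iio γ)) (hmem : ∀ ξ < γ, f ξ ∈ E) :
    Ordinal.lift.{u+1} γ ≤ otype E := by
  rw [← otype_Iio γ, otype, otype, type_le_iff']
  refine ⟨⟨⟨fun x => ⟨f x.1, hmem x.1 x.2⟩, fun a b hab => Subtype.ext ?_⟩, ?_⟩⟩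
  · exact hmono.injOn a.2 b.2 (by simpa using congrArg Subtype.val hab)
  · intro a b
    exact hmono.lt_iff_lt a.2 b.2


lemma exists_row_not_mem {F : Set Ordinal} (hF : F.Finite) {g : ℕ → Ordinal}
    (hg : StrictMono g) : ∃ m, g m ∉ F := by
  have h : (g ⁻¹' F).Finite := hF.preimage (hg.injective.injOn)
  obtain ⟨m, hm⟩ := h.infinite_compl.nonempty
  exact ⟨m, hm⟩

lemma rows_free (c : ℕ → Set Ordinal) (hc : ∀ n, Short (c n)) :
    ∀ (N : ℕ) (s : Finset ℕ), s.card ≤ N → ∀ (F : Set Ordinal), F.Finite →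
    ∀ (y : ℕ → ℕ → Ordinal),
      (∀ (i m i' m' : ℕ), i < i' → y i m < y i' m') →
      (∀ i, StrictMono (y i)) →
      ∃ i ≤ N, ∃ m, y i m ∉ F ∧ ∀ b ∈ s, y i m ∉ c b := by
  intro N
  induction N with
  | zero =>
    intro s hs F hF y _ h2
    have hse : s = ∅ := Finset.card_eq_zero.mp (Nat.le_zero.mp hs)
    obtain ⟨m, hm⟩ := exists_row_not_mem hF (h2 0)
    exact ⟨0, le_refl _, m, hm, by simp [hse]⟩
  | succ N ih =>
    intro s hs F hF y h1 h2
    by_cases hcard : s.card ≤ N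
    · obtain ⟨i, hi, m, hm⟩ := ih s hcard F hF y h1 h2
      exact ⟨i, hi.trans (Nat.le_succ N), m, hm⟩
    · obtain ⟨m₀, hm₀⟩ := exists_row_not_mem hF (h2 (N + 1))
      by_cases htop : ∀ b ∈ s, y (N + 1) m₀ ∉ c b
      · exact ⟨N + 1, le_refl _, m₀, hm₀, htop⟩
      · push_neg at htop
        obtain ⟨b, hb, hbc⟩ := htop
        have hF' : ({z ∈ c b | z < y (N + 1) m₀}).Finite := hc b _ hbc
        have hcard' : (s.erase b).card ≤ N := by
          have := Finset.card_erase_of_mem hb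
          omega
        obtain ⟨i, hi, m, hm1, hm2⟩ :=
          ih (s.erase b) hcard' (F ∪ {z ∈ c b | z < y (N + 1) m₀}) (hF.union hF') y h1 h2
        refine ⟨i, hi.trans (Nat.le_succ N), m, fun h => hm1 (Or.inl h), ?_⟩
        intro b' hb'
        by_cases hbb : b' = b
        · subst hbb
          intro hmem
          exact hm1 (Or.inr ⟨hmem, h1 i m (N + 1) m₀ (Nat.lt_succ_of_le hi)⟩)
        · exact hm2 b' (Finset.mem_erase.mpr ⟨hbb, hb'⟩)

lemma exists_freeW (d : ℕ → Set Ordinal) (hd : ∀ n, Short (d n)) (k : ℕ)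
    (α W : Ordinal) (hW : 0 < W) :
    ∃ ι, ι + 1 ≤ ω * ((k + 2 : ℕ) : Ordinal) ∧ ∀ n ≤ k, α + W * (ι + 1) ∉ d n := by
  have h1 : ∀ (i m i' m' : ℕ), i < i' →
      (α + W * ((ω * i + m) + 1)) < (α + W * ((ω * i' + m') + 1)) := by
    intro i m i' m' hii
    apply add_lt_add_right
    apply mul_lt_mul_of_pos_left _ hW
    rw [add_one_eq_succ, add_one_eq_succ]
    apply Order.succ_lt_succ
    calc ω * (i : Ordinal) + m < ω * i + ω := add_lt_add_right (nat_lt_omega0 m) _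
    _ = ω * ((i : Ordinal) + 1) := by rw [mul_add, mul_one]
    _ ≤ ω * i' := by
        apply mul_le_mul_right
        exact_mod_cast Nat.cast_le.mpr (by omega : i + 1 ≤ i')
    _ ≤ ω * i' + m' := le_self_add
  have h2 : ∀ (i : ℕ), StrictMono (fun m : ℕ => α + W * ((ω * (i : Ordinal) + m) + 1)) := by
    intro i m m' hmm
    simp only
    apply add_lt_add_right
    apply mul_lt_mul_of_pos_left _ hW
    rw [add_one_eq_succ, add_one_eq_succ]
    apply Order.succ_lt_succ
    apply add_lt_add_right
    exact_mod_cast Nat.cast_lt.mpr hmm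
  obtain ⟨i, hi, m, _, hfree⟩ := rows_free d hd (k + 1) (Finset.range (k + 1))
    (by simp) ∅ finite_empty (fun i m => α + W * ((ω * i + m) + 1)) h1 h2
  refine ⟨ω * i + m, ?_, fun n hn => hfree n (Finset.mem_range.mpr (by omega))⟩
  have hm1 : ((m : Ordinal) + 1) ≤ ω := (by exact_mod_cast nat_lt_omega0 (m + 1) : ((m : Ordinal) + 1) < ω).le
  calc (ω * (i : Ordinal) + m) + 1 = ω * i + ((m : Ordinal) + 1) := by rw [add_assoc]
  _ ≤ ω * i + ω := add_le_add_right hm1 _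
  _ = ω * ((i : Ordinal) + 1) := by rw [mul_add, mul_one]
  _ ≤ ω * ((k + 2 : ℕ) : Ordinal) := by
      apply mul_le_mul_right
      exact_mod_cast Nat.cast_le.mpr (by omega : i + 1 ≤ k + 2)

lemma exists_free (d : ℕ → Set Ordinal) (hd : ∀ n, Short (d n)) (k : ℕ) (α : Ordinal) :
    ∃ x, α < x ∧ x ≤ α + ω * ((k + 2 : ℕ) : Ordinal) ∧ ∀ n ≤ k, x ∉ d n := by
  obtain ⟨ι, hι, hfree⟩ := exists_freeW d hd k α 1 one_pos
  refine ⟨α + 1 * (ι + 1), ?_, ?_, hfree⟩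
  · rw [one_mul]
    calc α = α + 0 := (add_zero α).symm
    _ < α + (ι + 1) := add_lt_add_right (lt_of_lt_of_le zero_lt_one (le_add_self)) _
  · rw [one_mul]
    exact add_le_add_right hι _

lemma room {X μ ρ v : Ordinal} (hρ : ρ < ω ^ X * μ) (hv : v < ω ^ X) :
    ρ + v < ω ^ X * μ := by
  have W0 : (ω ^ X) ≠ 0 := (opow_pos X omega0_pos).ne'
  have hq : ρ / ω ^ X < μ := (Ordinal.div_lt W0).mpr hρ
  have hmod : ρ % ω ^ X < ω ^ X := Ordinal.mod_lt ρ W0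
  have hsum : ρ % ω ^ X + v < ω ^ X := principal_add_omega0_opow X hmod hv
  calc ρ + v = (ω ^ X * (ρ / ω ^ X) + ρ % ω ^ X) + v := by rw [Ordinal.div_add_mod]
  _ = ω ^ X * (ρ / ω ^ X) + (ρ % ω ^ X + v) := by rw [add_assoc]
  _ < ω ^ X * (ρ / ω ^ X) + ω ^ X := add_lt_add_right hsum _
  _ = ω ^ X * (ρ / ω ^ X + 1) := by rw [mul_add, mul_one]
  _ ≤ ω ^ X * μ := by
      apply mul_le_mul_right
      rw [add_one_eq_succ, Order.succ_le_iff]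
      exact hq

lemma room' {X μ α ξ v : Ordinal} (hα : α ≤ ξ) (hξ : ξ < α + ω ^ X * μ) (hv : v < ω ^ X) :
    ξ + v < α + ω ^ X * μ := by
  have hρ := Ordinal.add_sub_cancel_of_le hα
  rw [← hρ] at hξ ⊢
  rw [add_assoc]
  rw [add_lt_add_iff_left] at hξ ⊢
  exact room hξ hv

lemma unbounded_union (A : ℕ → Set Ordinal) (lam : Ordinal) (hlam : 0 < lam) :
    ∀ j : ℕ, (∀ ξ < lam, ∃ x, (∃ i < j, x ∈ A i) ∧ ξ < x ∧ x < lam) →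
    ∃ i < j, ∀ ξ < lam, ∃ x ∈ A i, ξ < x ∧ x < lam := by
  intro j
  induction j with
  | zero =>
    intro h
    obtain ⟨x, ⟨i, hi, _⟩, _⟩ := h 0 hlam
    omega
  | succ j ih =>
    intro h
    by_cases hA : ∀ ξ < lam, ∃ x ∈ A j, ξ < x ∧ x < lam
    · exact ⟨j, Nat.lt_succ_self j, hA⟩
    · push_neg at hA
      obtain ⟨ξ₀, hξ₀, hno⟩ := hA
      have hprem : ∀ ξ < lam, ∃ x, (∃ i < j, x ∈ A i) ∧ ξ < x ∧ x < lam := by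
        intro ξ hξ
        obtain ⟨x, ⟨i, hi, hxA⟩, hx1, hx2⟩ := h (max ξ ξ₀) (max_lt hξ hξ₀)
        have hi' : i < j := by
          rcases Nat.lt_succ_iff_lt_or_eq.mp hi with h' | rfl
          · exact h'
          · exact absurd (hno x hxA (lt_of_le_of_lt (le_max_right _ _) hx1)) (not_le.mpr hx2)
        exact ⟨x, ⟨i, hi', hxA⟩, lt_of_le_of_lt (le_max_left _ _) hx1, hx2⟩
      obtain ⟨i, hi, hA'⟩ := ih hprem
      exact ⟨i, hi.trans (Nat.lt_succ_self j), hA'⟩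

lemma exists_cofinal_seq (t : Ordinal) (ht : Order.IsSuccLimit t) (hc : t.card ≤ Cardinal.aleph0) :
    ∃ τ : ℕ → Ordinal, (∀ i, τ i < t) ∧ ∀ ξ < t, ∃ i, ξ < τ i := by
  have hmk : Cardinal.mk (Set.Iio t) ≤ Cardinal.aleph0 := by
    rw [Ordinal.mk_Iio_ordinal]
    calc Cardinal.lift t.card ≤ Cardinal.lift Cardinal.aleph0 := Cardinal.lift_le.mpr hc
    _ = Cardinal.aleph0 := Cardinal.lift_aleph0
  have hcnt : (Set.Iio t).Countable :=
    Set.countable_coe_iff.mp (Cardinal.mk_le_aleph0_iff.mp hmk)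
  obtain ⟨F, hF⟩ := hcnt.exists_eq_range ⟨0, ht.pos⟩
  refine ⟨fun i => F i + 1, fun i => ?_, fun ξ hξ => ?_⟩
  · have h : F i ∈ Set.Iio t := hF ▸ Set.mem_range_self i
    show F i + 1 < t
    rw [add_one_eq_succ]
    exact ht.succ_lt h
  · have : ξ ∈ Set.range F := hF ▸ hξ
    obtain ⟨i, rfl⟩ := this
    exact ⟨i, show F i < F i + 1 from lt_add_one _⟩

noncomputable def BB (γ : Ordinal) (k : ℕ) : Ordinal :=
  ω ^ (ω ^ (1 + γ) * ((k + 2 : ℕ) : Ordinal))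

lemma nat_pos_ord (n : ℕ) (h : 0 < n) : (1 : Ordinal) ≤ (n : Ordinal) := by
  exact_mod_cast Nat.one_le_cast.mpr h

lemma omega_le_BBexp (γ : Ordinal) (k : ℕ) :
    ω ≤ ω ^ (1 + γ) * ((k + 2 : ℕ) : Ordinal) := by
  calc ω = ω ^ (1 : Ordinal) := (opow_one ω).symm
  _ ≤ ω ^ (1 + γ) := opow_le_opow_right omega0_pos (le_self_add)
  _ = ω ^ (1 + γ) * 1 := (mul_one _).symm
  _ ≤ ω ^ (1 + γ) * ((k + 2 : ℕ) : Ordinal) := mul_le_mul_right (nat_pos_ord _ (by omega)) _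

lemma omega_mul_nat_le_BB (γ : Ordinal) (k n : ℕ) : ω * ((n : ℕ) : Ordinal) ≤ BB γ k := by
  have h2 : (2 : Ordinal) ≤ ω ^ (1 + γ) * ((k + 2 : ℕ) : Ordinal) :=
    le_trans (by exact_mod_cast (nat_lt_omega0 2).le) (omega_le_BBexp γ k)
  calc ω * ((n : ℕ) : Ordinal) ≤ ω * ω := mul_le_mul_right (nat_lt_omega0 n).le _
  _ = ω ^ (2 : Ordinal) := by rw [← one_add_one_eq_two, opow_add, opow_one]
  _ ≤ BB γ k := opow_le_opow_right omega0_pos h2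

lemma BB_mono (γ γ' : Ordinal) (k : ℕ) (h : γ ≤ γ') : BB γ k ≤ BB γ' k :=
  opow_le_opow_right omega0_pos
    (mul_le_mul_left (opow_le_opow_right omega0_pos (add_le_add_right h 1)) _)

lemma BB_succ (γ : Ordinal) (k : ℕ) :
    BB γ k + ω * ((k + 2 : ℕ) : Ordinal) ≤ BB (γ + 1) k := by
  set a := ω ^ (1 + γ) * ((k + 2 : ℕ) : Ordinal) with ha
  have h1 : ω * ((k + 2 : ℕ) : Ordinal) ≤ ω ^ a := omega_mul_nat_le_BB γ k (k + 2)
  have e : ω ^ a * 2 = ω ^ a + ω ^ a := by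
    rw [← one_add_one_eq_two, mul_add, mul_one]
  have h2 : ω ^ a + ω * ((k + 2 : ℕ) : Ordinal) ≤ ω ^ a * 2 := by
    rw [e]
    exact add_le_add_right h1 _
  have h3 : ω ^ a * 2 ≤ ω ^ (a + 1) := by
    rw [opow_add, opow_one]
    exact mul_le_mul_right (nat_lt_omega0 2).le _
  have h4 : a + 1 ≤ ω ^ (1 + (γ + 1)) * ((k + 2 : ℕ) : Ordinal) := by
    have e1 : ω ^ (1 + (γ + 1)) = ω ^ (1 + γ) * ω := by
      rw [← add_assoc, opow_add, opow_one]
    rw [e1]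
    calc a + 1 ≤ a + ω ^ (1 + γ) := add_le_add_right (Order.one_le_iff_pos.mpr (opow_pos _ omega0_pos)) _
    _ = ω ^ (1 + γ) * (((k + 2 : ℕ) : Ordinal) + 1) := by rw [mul_add, mul_one, ha]
    _ ≤ ω ^ (1 + γ) * ω := by
        apply mul_le_mul_right
        have : (((k + 2 : ℕ) : Ordinal) + 1) = ((k + 3 : ℕ) : Ordinal) := by push_cast; rw [add_assoc]; norm_num
        rw [this]
        exact (nat_lt_omega0 (k + 3)).le
    _ = ω ^ (1 + γ) * ω * 1 := (mul_one _).symm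
    _ ≤ ω ^ (1 + γ) * ω * ((k + 2 : ℕ) : Ordinal) := mul_le_mul_right (nat_pos_ord _ (by omega)) _
    _ = ω ^ (1 + γ) * (ω * ((k + 2 : ℕ) : Ordinal)) := mul_assoc _ _ _
    _ = _ := by rw [mul_assoc]
  calc BB γ k + ω * ((k + 2 : ℕ) : Ordinal) ≤ ω ^ (a + 1) := le_trans h2 h3
  _ ≤ BB (γ + 1) k := opow_le_opow_right omega0_pos h4


section
variable {β : Ordinal} (hlim : Order.IsSuccLimit β) (hω : ω < β)
  (hexp : ∀ ξ < β, ∀ η < β, ξ ^ η < β)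

include hlim hω hexp

lemma add_lt_beta {x y : Ordinal} (hx : x < β) (hy : y < β) : x + y < β := by
  have h2 : (2 : Ordinal) < β := lt_trans (nat_lt_omega0 2) hω
  set m := max x y + 2 with hm
  have hm2 : (2 : Ordinal) ≤ m := le_add_self
  have hmβ : m < β := by
    have h1 : max x y < β := max_lt hx hy
    have : max x y + 2 = Order.succ (Order.succ (max x y)) := by
      rw [← one_add_one_eq_two, ← add_assoc, add_one_eq_succ, add_one_eq_succ]
    rw [hm, this]
    exact hlim.succ_lt (hlim.succ_lt h1)
  have hxy : x + y ≤ m + m :=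
    add_le_add (le_trans (le_max_left x y) (le_self_add))
      (le_trans (le_max_right x y) (le_self_add))
  have e : m * 2 = m + m := by rw [← one_add_one_eq_two, mul_add, mul_one]
  have hmm : m + m ≤ m * m := by
    rw [← e]; exact mul_le_mul_right hm2 m
  have hsq : m * m < β := by
    have h := hexp m hmβ 2 h2
    rwa [← one_add_one_eq_two, opow_add, opow_one] at h
  exact lt_of_le_of_lt (hxy.trans hmm) hsq

lemma mul_lt_beta {x y : Ordinal} (hx : x < β) (hy : y < β) : x * y < β := by
  have h2 : (2 : Ordinal) < β := lt_trans (nat_lt_omega0 2) hω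
  set m := max x y + 2 with hm
  have hmβ : m < β := by
    have h1 : max x y < β := max_lt hx hy
    have : max x y + 2 = Order.succ (Order.succ (max x y)) := by
      rw [← one_add_one_eq_two, ← add_assoc, add_one_eq_succ, add_one_eq_succ]
    rw [hm, this]
    exact hlim.succ_lt (hlim.succ_lt h1)
  have hxy : x * y ≤ m * m :=
    mul_le_mul' (le_trans (le_max_left x y) (le_self_add))
      (le_trans (le_max_right x y) (le_self_add))
  have hsq : m * m < β := by
    have h := hexp m hmβ 2 h2
    rwa [← one_add_one_eq_two, opow_add, opow_one] at h
  exact lt_of_le_of_lt hxy hsq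

lemma nat_lt_beta (n : ℕ) : ((n : ℕ) : Ordinal) < β := lt_trans (nat_lt_omega0 n) hω

lemma BB_lt_beta {γ : Ordinal} (hγ : γ < β) (k : ℕ) : BB γ k < β := by
  have h1 : (1 : Ordinal) < β := lt_trans one_lt_omega0 hω
  have hγ1 : 1 + γ < β := add_lt_beta hlim hω hexp h1 hγ
  have hop : ω ^ (1 + γ) < β := hexp ω hω _ hγ1
  have hk : ((k + 2 : ℕ) : Ordinal) < β := nat_lt_beta hlim hω hexp (k + 2)
  have hmul : ω ^ (1 + γ) * ((k + 2 : ℕ) : Ordinal) < β := mul_lt_beta hlim hω hexp hop hk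
  exact hexp ω hω _ hmul

end

lemma BBexp_lt_W {γ g : Ordinal} (hγ : Order.IsSuccLimit γ) (hg : g < γ) (j : ℕ) :
    ω ^ (1 + g) * ((j + 2 : ℕ) : Ordinal) < ω ^ (1 + γ) := by
  have h1 : ω ^ (1 + g) * ((j + 2 : ℕ) : Ordinal) < ω ^ (1 + g) * ω :=
    mul_lt_mul_of_pos_left (nat_lt_omega0 (j + 2)) (opow_pos _ omega0_pos)
  have h2 : ω ^ (1 + g) * ω = ω ^ ((1 + g) + 1) := by rw [opow_add ω (1 + g) 1, opow_one]
  have h3 : (1 + g) + 1 ≤ 1 + γ := by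
    rw [add_assoc]
    apply add_le_add_right
    rw [add_one_eq_succ, Order.succ_le_iff]
    exact hg
  calc ω ^ (1 + g) * ((j + 2 : ℕ) : Ordinal) < ω ^ ((1 + g) + 1) := h2 ▸ h1
  _ ≤ ω ^ (1 + γ) := opow_le_opow_right omega0_pos h3

lemma BB_lt_W {γ g : Ordinal} (hγ : Order.IsSuccLimit γ) (hg : g < γ) (j : ℕ) :
    BB g j < ω ^ (ω ^ (1 + γ)) :=
  (opow_lt_opow_iff_right one_lt_omega0).mpr (BBexp_lt_W hγ hg j)

lemma W_mul_le_BB (γ : Ordinal) (k : ℕ) {ι : Ordinal}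
    (hι : ι + 1 ≤ ω * ((k + 2 : ℕ) : Ordinal)) :
    ω ^ (ω ^ (1 + γ)) * (ι + 1) ≤ BB γ k := by
  set X := ω ^ (1 + γ) with hX
  have hXω : ω ≤ X := by
    calc ω = ω ^ (1 : Ordinal) := (opow_one ω).symm
    _ ≤ X := opow_le_opow_right omega0_pos (le_self_add)
  have h1 : ω ^ X * (ι + 1) ≤ ω ^ X * (ω * ((k + 2 : ℕ) : Ordinal)) := mul_le_mul_right hι _
  have h2 : ω ^ X * (ω * ((k + 2 : ℕ) : Ordinal)) = ω ^ (X + 1) * ((k + 2 : ℕ) : Ordinal) := by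
    rw [← mul_assoc, opow_add, opow_one]
  have h3 : ω ^ (X + 1) * ((k + 2 : ℕ) : Ordinal) < ω ^ (X + 1) * ω :=
    mul_lt_mul_of_pos_left (nat_lt_omega0 (k + 2)) (opow_pos _ omega0_pos)
  have h4 : ω ^ (X + 1) * ω = ω ^ (X + 2) := by
    rw [show (X + 2 : Ordinal) = (X + 1) + 1 from by rw [add_assoc, one_add_one_eq_two],
      opow_add ω (X + 1) 1, opow_one]
  have h5 : ω ^ (X + 2) ≤ BB γ k := by
    apply opow_le_opow_right omega0_pos
    have e : X * 2 = X + X := by rw [← one_add_one_eq_two, mul_add, mul_one]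
    calc X + 2 ≤ X + X := add_le_add_right (le_trans (nat_lt_omega0 2).le hXω) _
    _ = X * 2 := e.symm
    _ ≤ X * ((k + 2 : ℕ) : Ordinal) := by
        apply mul_le_mul_right
        exact_mod_cast Nat.cast_le.mpr (by omega : 2 ≤ k + 2)
    _ = ω ^ (1 + γ) * ((k + 2 : ℕ) : Ordinal) := by rw [hX]
  calc ω ^ X * (ι + 1) ≤ ω ^ (X + 1) * ((k + 2 : ℕ) : Ordinal) := by rw [← h2]; exact h1
  _ ≤ ω ^ (X + 2) := h4 ▸ h3.le
  _ ≤ BB γ k := h5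

lemma main {β : Ordinal} (hlim : Order.IsSuccLimit β) (hcount : β.card ≤ Cardinal.aleph0)
    (hω : ω < β) (hexp : ∀ ξ < β, ∀ η < β, ξ ^ η < β)
    (d : ℕ → Set Ordinal) (hds : ∀ n, Short (d n)) :
    ∀ γ, γ < β → ∀ (k : ℕ) (α : Ordinal), α < β →
    ∃ (E : Set Ordinal) (mx : Ordinal) (f : Ordinal → Ordinal),
      (∀ x ∈ E, α < x) ∧ (∀ x ∈ E, x ≤ α + BB γ k) ∧
      mx ∈ E ∧ (∀ x ∈ E, x ≤ mx) ∧
      AClosed E ∧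
      StrictMonoOn f (Set.Iio γ) ∧ (∀ ξ, ξ < γ → f ξ ∈ E) ∧
      (∀ n ≤ k, ∀ x ∈ E, x ∉ d n) ∧
      (∀ n, (E ∩ d n).Finite) := by
  intro γ
  induction γ using Ordinal.induction with
  | h γ IH =>
  classical
  intro hγβ k α hαβ
  rcases Ordinal.zero_or_succ_or_isSuccLimit γ with h0 | ⟨γ₀, rfl⟩ | hlimγ
  · -- γ = 0
    subst h0
    obtain ⟨x, hx1, hx2, hx3⟩ := exists_free d hds k α
    refine ⟨{x}, x, id, ?_, ?_, rfl, ?_, ?_, ?_, ?_, ?_, ?_⟩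
    · intro y hy; rw [Set.mem_singleton_iff] at hy; subst hy; exact hx1
    · intro y hy; rw [Set.mem_singleton_iff] at hy; subst hy
      exact hx2.trans (add_le_add_right (omega_mul_nat_le_BB 0 k (k + 2)) α)
    · intro y hy; rw [Set.mem_singleton_iff] at hy; subst hy; exact le_refl _
    · intro lam hlam hub
      obtain ⟨z, hz, hz2, hz3⟩ := hub 0 hlam.pos
      rw [Set.mem_singleton_iff] at hz; subst hz
      obtain ⟨z', hz', hz2', _⟩ := hub z hz3
      rw [Set.mem_singleton_iff] at hz'; subst hz'
      exact absurd hz2' (lt_irrefl _)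
    · intro a ha; exact absurd ha ((zero_le (a := a)).not_gt)
    · intro ξ hξ; exact absurd hξ ((zero_le (a := ξ)).not_gt)
    · intro n hn y hy; rw [Set.mem_singleton_iff] at hy; subst hy; exact hx3 n hn
    · intro n; exact (Set.finite_singleton x).inter_of_left _
  · -- successor case
    have hγ₀β : γ₀ < β := lt_trans (Order.lt_succ γ₀) hγβ
    obtain ⟨E', mx', f', hE1, hE2, hmx1, hmx2, hcl, hmono, hfmem, havoid, hfin⟩ :=
      IH γ₀ (Order.lt_succ γ₀) hγ₀β k α hαβ
    obtain ⟨x, hx1, hx2, hx3⟩ := exists_free d hds k mx'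
    have hmx'x : ∀ y ∈ E', y < x := fun y hy => lt_of_le_of_lt (hmx2 y hy) hx1
    refine ⟨insert x E', x, fun ξ => if ξ = γ₀ then x else f' ξ,
      ?_, ?_, Set.mem_insert x E', ?_, ?_, ?_, ?_, ?_, ?_⟩
    · rintro y (rfl | hy)
      · exact lt_trans (hE1 mx' hmx1) hx1
      · exact hE1 y hy
    · rintro y (rfl | hy)
      · have h1 : y ≤ (α + BB γ₀ k) + ω * ((k + 2 : ℕ) : Ordinal) :=
          hx2.trans (add_le_add_left (hmx2 mx' hmx1 |>.trans (hE2 mx' hmx1)) _)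
        rw [add_assoc] at h1
        refine h1.trans (add_le_add_right ?_ α)
        rw [← add_one_eq_succ]
        exact BB_succ γ₀ k
      · exact (hE2 y hy).trans (add_le_add_right (BB_mono γ₀ (Order.succ γ₀) k (Order.le_succ γ₀)) α)
    · rintro y (rfl | hy)
      · exact le_refl _
      · exact (hmx'x y hy).le
    · intro lam hlam hub
      rcases lt_trichotomy lam x with h | h | h
      · have hub' : ∀ ξ < lam, ∃ z ∈ E', ξ < z ∧ z < lam := by
          intro ξ hξ
          obtain ⟨z, hz, hz1, hz2⟩ := hub ξ hξ
          rcases hz with rfl | hz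
          · exact absurd (lt_trans hz2 h) (lt_irrefl z)
          · exact ⟨z, hz, hz1, hz2⟩
        exact Set.mem_insert_of_mem x (hcl lam hlam hub')
      · rw [h]; exact Set.mem_insert x E'
      · obtain ⟨z, hz, hz1, hz2⟩ := hub x h
        rcases hz with rfl | hz
        · exact absurd hz1 (lt_irrefl z)
        · exact absurd hz1 (not_lt.mpr (hmx'x z hz).le)
    · intro ξ hξ ξ' hξ' hlt
      show (if ξ = γ₀ then x else f' ξ) < (if ξ' = γ₀ then x else f' ξ')
      rw [Set.mem_Iio, Order.lt_succ_iff] at hξ'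
      rcases eq_or_lt_of_le hξ' with rfl | hξ'lt
      · have hne : ξ ≠ ξ' := ne_of_lt hlt
        simp only [if_neg hne, if_pos rfl]
        have : f' ξ ∈ E' := hfmem ξ hlt
        exact hmx'x _ this
      · have hne : ξ ≠ γ₀ := ne_of_lt (lt_trans hlt hξ'lt)
        have hne' : ξ' ≠ γ₀ := ne_of_lt hξ'lt
        simp only [if_neg hne, if_neg hne']
        exact hmono (lt_trans hlt hξ'lt) hξ'lt hlt
    · intro ξ hξ
      show (if ξ = γ₀ then x else f' ξ) ∈ insert x E'
      rw [Order.lt_succ_iff] at hξ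
      rcases eq_or_lt_of_le hξ with rfl | hlt
      · simp only [if_pos rfl]; exact Set.mem_insert x E'
      · have hne : ξ ≠ γ₀ := ne_of_lt hlt
        simp only [if_neg hne]
        exact Set.mem_insert_of_mem x (hfmem ξ hlt)
    · rintro n hn y (rfl | hy)
      · exact hx3 n hn
      · exact havoid n hn y hy
    · intro n
      refine Set.Finite.subset ((hfin n).insert x) ?_
      rintro y ⟨(rfl | hy), hy2⟩
      · exact Set.mem_insert y _
      · exact Set.mem_insert_of_mem x ⟨hy, hy2⟩
  · -- limit case
    set X := ω ^ (1 + γ) with hX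
    have hXω : ω ≤ X := by
      calc ω = ω ^ (1 : Ordinal) := (opow_one ω).symm
      _ ≤ X := opow_le_opow_right omega0_pos (le_self_add)
    have hX0 : X ≠ 0 := (opow_pos _ omega0_pos).ne'
    have hWlim : Order.IsSuccLimit (ω ^ X) := isSuccLimit_opow_left isSuccLimit_omega0 hX0
    obtain ⟨ι, hι1, hι2⟩ := exists_freeW d hds k α (ω ^ X) (opow_pos _ omega0_pos)
    set t := α + ω ^ X * (ι + 1) with ht
    have htlim : Order.IsSuccLimit t := by
      have e : ω ^ X * (ι + 1) = ω ^ X * ι + ω ^ X := by rw [mul_add, mul_one]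
      rw [ht, e, ← add_assoc]
      exact isSuccLimit_add _ hWlim
    have hαt : α < t := by
      rw [ht]
      calc α = α + 0 := (add_zero α).symm
      _ < α + ω ^ X * (ι + 1) := by
          apply add_lt_add_right
          exact mul_pos (opow_pos _ omega0_pos)
            (lt_of_lt_of_le zero_lt_one (le_add_self))
    have htb : t ≤ α + BB γ k := add_le_add_right (W_mul_le_BB γ k hι1) α
    have htβ : t < β := lt_of_le_of_lt htb (add_lt_beta hlim hω hexp hαβ (BB_lt_beta hlim hω hexp hγβ k))
    have hroom : ∀ ξ, α ≤ ξ → ξ < t → ∀ v, v < ω ^ X → ξ + v < t := by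
      intro ξ h1 h2 v hv
      rw [ht] at h2 ⊢
      exact room' h1 h2 hv
    obtain ⟨g, hg1, hg2⟩ := exists_cofinal_seq γ hlimγ
      (le_trans (Ordinal.card_le_card hγβ.le) hcount)
    obtain ⟨τ, hτ1, hτ2⟩ := exists_cofinal_seq t htlim
      (le_trans (Ordinal.card_le_card htβ.le) hcount)
    have step : ∀ (i : ℕ) (b : Ordinal), ∃ (E : Set Ordinal) (mx : Ordinal)
        (f : Ordinal → Ordinal), α ≤ b → b < t →
        ((∀ x ∈ E, b < x) ∧ (∀ x ∈ E, x < t) ∧ mx ∈ E ∧ (∀ x ∈ E, x ≤ mx) ∧ AClosed E ∧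
         StrictMonoOn f (Set.Iio (g i)) ∧ (∀ ξ, ξ < g i → f ξ ∈ E) ∧
         (∀ n ≤ max k i, ∀ x ∈ E, x ∉ d n) ∧ (∀ n, (E ∩ d n).Finite)) := by
      intro i b
      by_cases hb : α ≤ b ∧ b < t
      · obtain ⟨E, mx, f, h1, h2, h3, h4, h5, h6, h7, h8, h9⟩ :=
          IH (g i) (hg1 i) (lt_trans (hg1 i) hγβ) (max k i) b (lt_trans hb.2 htβ)
        refine ⟨E, mx, f, fun _ _ => ⟨h1, ?_, h3, h4, h5, h6, h7, h8, h9⟩⟩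
        intro x hx
        have hxb := h2 x hx
        have hBB : BB (g i) (max k i) < ω ^ X := BB_lt_W hlimγ (hg1 i) (max k i)
        exact lt_of_le_of_lt hxb (hroom b hb.1 hb.2 _ hBB)
      · exact ⟨∅, 0, id, fun h1 h2 => absurd ⟨h1, h2⟩ hb⟩
    choose Eb mxb fb hstep using step
    set bs : ℕ → Ordinal := fun i =>
      Nat.rec (max α (τ 0)) (fun i prev => max (max α (τ (i + 1))) (mxb i prev)) i with hbs
    have hbs0 : bs 0 = max α (τ 0) := rfl
    have hbsS : ∀ i, bs (i + 1) = max (max α (τ (i + 1))) (mxb i (bs i)) := fun i => rfl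
    have hbsα : ∀ i, α ≤ bs i := by
      intro i
      cases i with
      | zero => exact le_max_left _ _
      | succ i => rw [hbsS i]; exact le_trans (le_max_left _ _) (le_max_left _ _)
    have hbst : ∀ i, bs i < t := by
      intro i
      induction i with
      | zero => exact max_lt hαt (hτ1 0)
      | succ i ih =>
        rw [hbsS i]
        apply max_lt (max_lt hαt (hτ1 (i + 1)))
        obtain ⟨_, h2, h3, _⟩ := hstep i (bs i) (hbsα i) ih
        exact h2 _ h3
    have hblk := fun i => hstep i (bs i) (hbsα i) (hbst i)
    set EE : ℕ → Set Ordinal := fun i => Eb i (bs i) with hEE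
    set mxE : ℕ → Ordinal := fun i => mxb i (bs i) with hmxE
    have hτbs : ∀ i, τ i ≤ bs i := by
      intro i
      cases i with
      | zero => exact le_max_right _ _
      | succ i => rw [hbsS i]; exact le_trans (le_max_right _ _) (le_max_left _ _)
    have hmxbs : ∀ i, mxE i ≤ bs (i + 1) := by
      intro i; rw [hbsS i]; exact le_max_right _ _
    have hbsmono : Monotone bs := by
      apply monotone_nat_of_le_succ
      intro i
      refine le_trans ?_ (hmxbs i)
      exact ((hblk i).1 _ (hblk i).2.2.1).le
    -- elements of block i are > bs i and ≤ mxE i < t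
    have hEbnd : ∀ i, ∀ x ∈ EE i, bs i < x ∧ x ≤ mxE i := by
      intro i x hx
      exact ⟨(hblk i).1 x hx, (hblk i).2.2.2.1 x hx⟩
    have hmxt : ∀ i, mxE i < t := fun i => (hblk i).2.1 _ (hblk i).2.2.1
    -- the big set
    set E : Set Ordinal := insert t (⋃ i, EE i) with hE
    set F : Ordinal → Ordinal := fun ξ =>
      if h : ∃ i, ξ < g i then fb (Nat.find h) (bs (Nat.find h)) ξ else 0 with hF
    have hFval : ∀ ξ (h : ∃ i, ξ < g i), F ξ = fb (Nat.find h) (bs (Nat.find h)) ξ := by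
      intro ξ h; rw [hF]; simp only [dif_pos h]
    have hFmem : ∀ ξ, ξ < γ → F ξ ∈ E := by
      intro ξ hξ
      have h : ∃ i, ξ < g i := hg2 ξ hξ
      rw [hFval ξ h]
      exact Set.mem_insert_of_mem t (Set.mem_iUnion.mpr ⟨Nat.find h,
        ((hblk (Nat.find h)).2.2.2.2.2.2.1 ξ (Nat.find_spec h))⟩)
    refine ⟨E, t, F, ?_, ?_, Set.mem_insert t _, ?_, ?_, ?_, hFmem, ?_, ?_⟩
    · -- α < x
      rintro x (rfl | hx)
      · exact hαt
      · obtain ⟨i, hi⟩ := Set.mem_iUnion.mp hx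
        exact lt_of_le_of_lt (hbsα i) ((hEbnd i x hi).1)
    · -- x ≤ α + BB γ k
      rintro x (rfl | hx)
      · exact htb
      · obtain ⟨i, hi⟩ := Set.mem_iUnion.mp hx
        exact le_trans (le_of_lt (lt_of_le_of_lt ((hEbnd i x hi).2) (hmxt i))) htb
    · -- x ≤ t
      rintro x (rfl | hx)
      · exact le_refl t
      · obtain ⟨i, hi⟩ := Set.mem_iUnion.mp hx
        exact (lt_of_le_of_lt ((hEbnd i x hi).2) (hmxt i)).le
    · -- AClosed E
      intro lam hlam hub
      rcases lt_trichotomy lam t with h | h | h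
      · -- lam < t : find j with lam < τ j
        obtain ⟨j, hj⟩ := hτ2 lam h
        have hjb : lam < bs j := lt_of_lt_of_le hj (hτbs j)
        have hub' : ∀ ξ < lam, ∃ x, (∃ i < j, x ∈ EE i) ∧ ξ < x ∧ x < lam := by
          intro ξ hξ
          obtain ⟨x, hx, hx1, hx2⟩ := hub ξ hξ
          rcases hx with rfl | hx
          · exact absurd h (not_lt.mpr hx2.le)
          · obtain ⟨i, hi⟩ := Set.mem_iUnion.mp hx
            refine ⟨x, ⟨i, ?_, hi⟩, hx1, hx2⟩
            by_contra hij
            push_neg at hij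
            have : bs j ≤ bs i := hbsmono hij
            exact absurd (lt_trans hx2 hjb) (not_lt.mpr (le_trans this ((hEbnd i x hi).1.le)))
        obtain ⟨i, hij, hA⟩ := unbounded_union EE lam hlam.pos j hub'
        exact Set.mem_insert_of_mem t (Set.mem_iUnion.mpr ⟨i,
          (hblk i).2.2.2.2.1 lam hlam hA⟩)
      · rw [h]; exact Set.mem_insert t _
      · obtain ⟨x, hx, hx1, hx2⟩ := hub t h
        rcases hx with rfl | hx
        · exact absurd hx1 (lt_irrefl _)
        · obtain ⟨i, hi⟩ := Set.mem_iUnion.mp hx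
          exact absurd hx1 (not_lt.mpr (lt_of_le_of_lt ((hEbnd i x hi).2) (hmxt i)).le)
    · -- StrictMonoOn F (Iio γ)
      intro ξ hξ ξ' hξ' hlt
      have h : ∃ i, ξ < g i := hg2 ξ hξ
      have h' : ∃ i, ξ' < g i := hg2 ξ' hξ'
      rw [hFval ξ h, hFval ξ' h']
      have hii' : Nat.find h ≤ Nat.find h' :=
        Nat.find_min' h (lt_trans hlt (Nat.find_spec h'))
      rcases eq_or_lt_of_le hii' with heq | hlt'
      · rw [heq]
        exact (hblk (Nat.find h')).2.2.2.2.2.1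
          (show ξ ∈ Set.Iio (g (Nat.find h')) from heq ▸ Nat.find_spec h)
          (Nat.find_spec h') hlt
      · have hm1 : fb (Nat.find h) (bs (Nat.find h)) ξ ∈ EE (Nat.find h) :=
          (hblk (Nat.find h)).2.2.2.2.2.2.1 ξ (Nat.find_spec h)
        have hm2 : fb (Nat.find h') (bs (Nat.find h')) ξ' ∈ EE (Nat.find h') :=
          (hblk (Nat.find h')).2.2.2.2.2.2.1 ξ' (Nat.find_spec h')
        calc fb (Nat.find h) (bs (Nat.find h)) ξ ≤ mxE (Nat.find h) :=
              (hEbnd _ _ hm1).2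
        _ ≤ bs (Nat.find h + 1) := hmxbs _
        _ ≤ bs (Nat.find h') := hbsmono hlt'
        _ < fb (Nat.find h') (bs (Nat.find h')) ξ' := (hEbnd _ _ hm2).1
    · -- avoid d n for n ≤ k
      rintro n hn x (rfl | hx)
      · exact hι2 n hn
      · obtain ⟨i, hi⟩ := Set.mem_iUnion.mp hx
        exact (hblk i).2.2.2.2.2.2.2.1 n (le_trans hn (le_max_left k i)) x hi
    · -- finiteness
      intro n
      have hsub : E ∩ d n ⊆ insert t (⋃ i ∈ Set.Iio n, (EE i ∩ d n)) := by
        rintro x ⟨(rfl | hx), hxd⟩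
        · exact Set.mem_insert _ _
        · obtain ⟨i, hi⟩ := Set.mem_iUnion.mp hx
          by_cases hin : i < n
          · exact Set.mem_insert_of_mem t
              (Set.mem_biUnion hin ⟨hi, hxd⟩)
          · push_neg at hin
            exact absurd hxd ((hblk i).2.2.2.2.2.2.2.1 n
              (le_trans hin (le_max_right k i)) x hi)
      exact Set.Finite.subset (Set.Finite.insert t
        ((Set.finite_Iio n).biUnion (fun i _ => (hblk i).2.2.2.2.2.2.2.2 n))) hsub

end ClubAux

/-- Lemma 1.2: the ideal `club_β` is proper.  For every countable family
`{d n}` of subsets of the ε-number `β` of order type `ω` there is a closed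
subset `e ⊆ β` of order type `β` with `e ∩ d n` finite for every `n`. -/
theorem club_ideal_proper
    (β : Ordinal) (hlim : Order.IsSuccLimit β) (hcount : β.card ≤ Cardinal.aleph0)
    (hω : Ordinal.omega0 < β) (hexp : ∀ ξ < β, ∀ η < β, ξ ^ η < β)
    (d : ℕ → Set Ordinal)
    (hd : ∀ n : ℕ, (∀ x ∈ d n, x < β) ∧ (d n).Infinite ∧
      ∀ x ∈ d n, {y ∈ d n | y < x}.Finite) :
    ∃ e : Set Ordinal, (∀ x ∈ e, x < β) ∧ ClosedIn e β ∧ HasOrderType e β ∧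
      ∀ n : ℕ, (e ∩ d n).Finite := by
  classical
  have hds : ∀ n, ClubAux.Short (d n) := fun n => (hd n).2.2
  obtain ⟨τ, hτ1, hτ2⟩ := ClubAux.exists_cofinal_seq β hlim hcount
  have main := ClubAux.main hlim hcount hω hexp d hds
  have step : ∀ (j : ℕ) (b : Ordinal), ∃ (E : Set Ordinal) (mx : Ordinal)
      (f : Ordinal → Ordinal), b < β →
      ((∀ x ∈ E, b < x) ∧ (∀ x ∈ E, x < β) ∧ mx ∈ E ∧ (∀ x ∈ E, x ≤ mx) ∧
       ClubAux.AClosed E ∧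
       StrictMonoOn f (Set.Iio (τ j)) ∧ (∀ ξ, ξ < τ j → f ξ ∈ E) ∧
       (∀ n ≤ j, ∀ x ∈ E, x ∉ d n) ∧ (∀ n, (E ∩ d n).Finite)) := by
    intro j b
    by_cases hb : b < β
    · obtain ⟨E, mx, f, h1, h2, h3, h4, h5, h6, h7, h8, h9⟩ :=
        main (τ j) (hτ1 j) j b hb
      refine ⟨E, mx, f, fun _ => ⟨h1, ?_, h3, h4, h5, h6, h7, h8, h9⟩⟩
      intro x hx
      exact lt_of_le_of_lt (h2 x hx)
        (ClubAux.add_lt_beta hlim hω hexp hb (ClubAux.BB_lt_beta hlim hω hexp (hτ1 j) j))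
    · exact ⟨∅, 0, id, fun h => absurd h hb⟩
  choose Eb mxb fb hstep using step
  set bs : ℕ → Ordinal := fun j =>
    Nat.rec (τ 0) (fun j prev => max (τ (j + 1)) (mxb j prev)) j with hbs
  have hbsS : ∀ j, bs (j + 1) = max (τ (j + 1)) (mxb j (bs j)) := fun _ => rfl
  have hbst : ∀ j, bs j < β := by
    intro j
    induction j with
    | zero => exact hτ1 0
    | succ j ih =>
      rw [hbsS j]
      apply max_lt (hτ1 (j + 1))
      obtain ⟨_, h2, h3, _⟩ := hstep j (bs j) ih
      exact h2 _ h3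
  have hblk := fun j => hstep j (bs j) (hbst j)
  set EE : ℕ → Set Ordinal := fun j => Eb j (bs j) with hEE
  set mxE : ℕ → Ordinal := fun j => mxb j (bs j) with hmxE
  have hτbs : ∀ j, τ j ≤ bs j := by
    intro j
    cases j with
    | zero => exact le_refl _
    | succ j => rw [hbsS j]; exact le_max_left _ _
  have hmxbs : ∀ j, mxE j ≤ bs (j + 1) := by
    intro j; rw [hbsS j]; exact le_max_right _ _
  have hbsmono : Monotone bs := by
    apply monotone_nat_of_le_succ
    intro j
    refine le_trans ?_ (hmxbs j)
    exact ((hblk j).1 _ (hblk j).2.2.1).le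
  have hEbnd : ∀ j, ∀ x ∈ EE j, bs j < x ∧ x ≤ mxE j := by
    intro j x hx
    exact ⟨(hblk j).1 x hx, (hblk j).2.2.2.1 x hx⟩
  set e : Set Ordinal := ⋃ j, EE j with he
  have hesub : ∀ x ∈ e, x < β := by
    intro x hx
    obtain ⟨j, hj⟩ := Set.mem_iUnion.mp hx
    exact (hblk j).2.1 x hj
  set F : Ordinal → Ordinal := fun ξ =>
    if h : ∃ j, ξ < τ j then fb (Nat.find h) (bs (Nat.find h)) ξ else 0 with hF
  have hFval : ∀ ξ (h : ∃ j, ξ < τ j), F ξ = fb (Nat.find h) (bs (Nat.find h)) ξ := by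
    intro ξ h; rw [hF]; simp only [dif_pos h]
  have hτle : ∀ (h : ∃ j, (0:Ordinal) < τ j) ξ (hh : ∃ j, ξ < τ j), ξ < τ (Nat.find hh) :=
    fun _ ξ hh => Nat.find_spec hh
  have hFmem : ∀ ξ, ξ < β → F ξ ∈ e := by
    intro ξ hξ
    have h : ∃ j, ξ < τ j := hτ2 ξ hξ
    rw [hFval ξ h]
    exact Set.mem_iUnion.mpr ⟨Nat.find h,
      ((hblk (Nat.find h)).2.2.2.2.2.2.1 ξ (Nat.find_spec h))⟩
  have hFmono : StrictMonoOn F (Set.Iio β) := by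
    intro ξ hξ ξ' hξ' hlt
    have h : ∃ j, ξ < τ j := hτ2 ξ hξ
    have h' : ∃ j, ξ' < τ j := hτ2 ξ' hξ'
    rw [hFval ξ h, hFval ξ' h']
    have hii' : Nat.find h ≤ Nat.find h' :=
      Nat.find_min' h (lt_trans hlt (Nat.find_spec h'))
    rcases eq_or_lt_of_le hii' with heq | hlt'
    · rw [heq]
      exact (hblk (Nat.find h')).2.2.2.2.2.1
        (show ξ ∈ Set.Iio (τ (Nat.find h')) from heq ▸ Nat.find_spec h)
        (Nat.find_spec h') hlt
    · have hm1 : fb (Nat.find h) (bs (Nat.find h)) ξ ∈ EE (Nat.find h) :=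
        (hblk (Nat.find h)).2.2.2.2.2.2.1 ξ (Nat.find_spec h)
      have hm2 : fb (Nat.find h') (bs (Nat.find h')) ξ' ∈ EE (Nat.find h') :=
        (hblk (Nat.find h')).2.2.2.2.2.2.1 ξ' (Nat.find_spec h')
      calc fb (Nat.find h) (bs (Nat.find h)) ξ ≤ mxE (Nat.find h) := (hEbnd _ _ hm1).2
      _ ≤ bs (Nat.find h + 1) := hmxbs _
      _ ≤ bs (Nat.find h') := hbsmono hlt'
      _ < fb (Nat.find h') (bs (Nat.find h')) ξ' := (hEbnd _ _ hm2).1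
  refine ⟨e, hesub, ?_, ?_, ?_⟩
  · -- ClosedIn e β
    intro lam hlamβ hlam hub
    obtain ⟨j, hj⟩ := hτ2 lam hlamβ
    have hjb : lam < bs j := lt_of_lt_of_le hj (hτbs j)
    have hub' : ∀ ξ < lam, ∃ x, (∃ i < j, x ∈ EE i) ∧ ξ < x ∧ x < lam := by
      intro ξ hξ
      obtain ⟨x, hx, hx1, hx2⟩ := hub ξ hξ
      obtain ⟨i, hi⟩ := Set.mem_iUnion.mp hx
      refine ⟨x, ⟨i, ?_, hi⟩, hx1, hx2⟩
      by_contra hij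
      push_neg at hij
      have hle : bs j ≤ bs i := hbsmono hij
      exact absurd (lt_trans hx2 hjb) (not_lt.mpr (le_trans hle ((hEbnd i x hi).1.le)))
    obtain ⟨i, hij, hA⟩ := ClubAux.unbounded_union EE lam hlam.pos j hub'
    exact Set.mem_iUnion.mpr ⟨i, (hblk i).2.2.2.2.1 lam hlam hA⟩
  · -- HasOrderType e β
    show otype e = Ordinal.lift β
    apply le_antisymm
    · rw [← ClubAux.otype_Iio β]
      exact ClubAux.otype_mono (fun x hx => hesub x hx)
    · exact ClubAux.le_otype hFmono hFmem
  · -- finiteness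
    intro n
    have hsub : e ∩ d n ⊆ ⋃ j ∈ Set.Iio n, (EE j ∩ d n) := by
      rintro x ⟨hx, hxd⟩
      obtain ⟨j, hj⟩ := Set.mem_iUnion.mp hx
      by_cases hjn : j < n
      · exact Set.mem_biUnion hjn ⟨hj, hxd⟩
      · push_neg at hjn
        exact absurd hxd ((hblk j).2.2.2.2.2.2.2.1 n hjn x hj)
    exact Set.Finite.subset
      ((Set.finite_Iio n).biUnion (fun j _ => (hblk j).2.2.2.2.2.2.2.2 n)) hsub
end

section
/- Fix a limit ordinal γ with cofinal increasing c_γ : ω → γ, and f : ω → ω. For each k, the set of ξ ∈ [c_γ(k−1), c_γ(k)) such that the walk from c_γ(k) to ξ has norm < f(k) is finite. -/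
open Ordinal Set

section Aux

variable {C : Ordinal → ℕ → Ordinal}

private lemma add_one_cancel {a b : Ordinal} (h : a + 1 = b + 1) : a = b := by
  rw [Ordinal.add_one_eq_succ, Ordinal.add_one_eq_succ] at h
  exact Order.succ_eq_succ_iff.mp h

private lemma walkStep_det {ξ a b b' : Ordinal} (h : WalkStep C ξ a b)
    (h' : WalkStep C ξ a b') : b = b' := by
  rcases h with ⟨hna, hb⟩ | ⟨hla, n, hb, hn1, hn2⟩
  · rcases h' with ⟨_, hb'⟩ | ⟨hla, _⟩
    · exact add_one_cancel (hb.trans hb'.symm)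
    · exact absurd hla hna
  · rcases h' with ⟨hna, _⟩ | ⟨_, n', hb', hn1', hn2'⟩
    · exact absurd hla hna
    · have : n = n' := by
        rcases lt_trichotomy n n' with h | h | h
        · exact absurd (hn2' n h) (not_lt.mpr hn1)
        · exact h
        · exact absurd (hn2 n' h) (not_lt.mpr hn1')
      rw [hb, hb', this]

private lemma walkStep_lt (hC : LadderSystem C) {ξ a b : Ordinal}
    (ha : a.card ≤ Cardinal.aleph0) (h : WalkStep C ξ a b) : b < a := by
  rcases h with ⟨_, hb⟩ | ⟨hla, n, hb, _, _⟩
  · rw [← hb, Ordinal.add_one_eq_succ]; exact Order.lt_succ b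
  · rw [hb]; exact (hC a hla ha).2.1 n

/-- Every element of a walk-chain is `≤` the head. -/
private lemma chain_le (hC : LadderSystem C) {ξ : Ordinal} :
    ∀ (l : List Ordinal) (η : Ordinal), η.card ≤ Cardinal.aleph0 → l.head? = some η →
      l.Chain' (fun a b => a ≠ ξ ∧ WalkStep C ξ a b) → ∀ a ∈ l, a ≤ η := by
  intro l
  induction l with
  | nil => intro η _ h; simp at h
  | cons x t IH =>
    intro η hη hhead hchain a ha
    have hx : η = x := by symm; simpa using hhead
    subst hx
    rcases List.mem_cons.mp ha with rfl | hat
    · exact le_refl _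
    · cases t with
      | nil => simp at hat
      | cons b t' =>
        simp only [List.Chain', List.isChain_cons_cons] at hchain
        have hb : b < η := walkStep_lt hC hη hchain.1.2
        have hbcard : b.card ≤ Cardinal.aleph0 :=
          (Ordinal.card_le_card hb.le).trans hη
        exact (IH b hbcard rfl hchain.2 a hat).trans hb.le

private lemma walk_tail {ξ η b : Ordinal} {t : List Ordinal}
    (h : IsWalk C ξ η (η :: b :: t)) : IsWalk C ξ b (b :: t) := by
  obtain ⟨_, hlast, hchain⟩ := h
  exact ⟨rfl, by rwa [List.getLast?_cons_cons] at hlast, hchain.tail⟩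

private lemma walk_unique {ξ : Ordinal} :
    ∀ (l₁ l₂ : List Ordinal) (η : Ordinal), IsWalk C ξ η l₁ → IsWalk C ξ η l₂ → l₁ = l₂ := by
  intro l₁
  induction l₁ with
  | nil => intro l₂ η h _; exact absurd h.1 (by simp)
  | cons x t₁ IH =>
    intro l₂ η h₁ h₂
    have hx : η = x := by symm; simpa using h₁.1
    subst hx
    cases l₂ with
    | nil => exact absurd h₂.1 (by simp)
    | cons y t₂ =>
      have hy : η = y := by symm; simpa using h₂.1
      subst hy
      cases t₁ with
      | nil =>
        have hxξ : η = ξ := by simpa using h₁.2.1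
        cases t₂ with
        | nil => rfl
        | cons b₂ t₂' =>
          have hc := h₂.2.2
          simp only [List.Chain', List.isChain_cons_cons] at hc
          exact absurd hxξ hc.1.1
      | cons b₁ t₁' =>
        cases t₂ with
        | nil =>
          have hxξ : η = ξ := by simpa using h₂.2.1
          have hc := h₁.2.2
          simp only [List.Chain', List.isChain_cons_cons] at hc
          exact absurd hxξ hc.1.1
        | cons b₂ t₂' =>
          have hc₁ := h₁.2.2; simp only [List.Chain', List.isChain_cons_cons] at hc₁
          have hc₂ := h₂.2.2; simp only [List.Chain', List.isChain_cons_cons] at hc₂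
          have hb : b₁ = b₂ := walkStep_det hc₁.1.2 hc₂.1.2
          rw [← hb] at h₂ ⊢
          have := IH (b₁ :: t₂') b₁ (walk_tail h₁) (walk_tail h₂)
          rw [this]

private lemma walk_exists (hC : LadderSystem C) {ξ : Ordinal} :
    ∀ η : Ordinal, η.card ≤ Cardinal.aleph0 → ξ ≤ η → ∃ l, IsWalk C ξ η l := by
  intro η
  induction η using Ordinal.induction with
  | h η IH =>
    intro hη hξ
    rcases eq_or_lt_of_le hξ with rfl | hlt
    · exact ⟨[ξ], rfl, rfl, List.isChain_singleton _⟩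
    · -- find the next step b
      obtain ⟨b, hblt, hbξ, hstep⟩ :
          ∃ b, b < η ∧ ξ ≤ b ∧ WalkStep C ξ η b := by
        rcases Ordinal.zero_or_succ_or_isSuccLimit η with h0 | ⟨a, ha⟩ | hl
        · exact absurd h0 (by rintro rfl; simp at hlt)
        · replace ha := ha.symm
          rw [← Ordinal.add_one_eq_succ] at ha
          refine ⟨a, ?_, ?_, Or.inl ⟨?_, ha.symm⟩⟩
          · rw [ha, Ordinal.add_one_eq_succ]; exact Order.lt_succ a
          · rw [ha, Ordinal.add_one_eq_succ, Order.lt_succ_iff] at hlt; exact hlt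
          · rw [ha, Ordinal.add_one_eq_succ]; exact Order.not_isSuccLimit_succ a
        · obtain ⟨hmono, hCltη, hcof⟩ := hC η hl hη
          obtain ⟨n, hn⟩ := hcof ξ hlt
          classical
          have hex : ∃ n, ξ ≤ C η n := ⟨n, hn⟩
          refine ⟨C η (Nat.find hex), hCltη _, Nat.find_spec hex, Or.inr ⟨hl, Nat.find hex, rfl,
            Nat.find_spec hex, fun m hm => ?_⟩⟩
          exact not_le.mp (Nat.find_min hex hm)
      obtain ⟨l', hl'⟩ := IH b hblt ((Ordinal.card_le_card hblt.le).trans hη) hbξ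
      obtain ⟨hhead, hlast, hchain⟩ := hl'
      cases l' with
      | nil => simp at hhead
      | cons b' t =>
        have hb' : b = b' := by symm; simpa using hhead
        subst hb'
        refine ⟨η :: b :: t, rfl, by rwa [List.getLast?_cons_cons], ?_⟩
        simp only [List.Chain', List.isChain_cons_cons]
        exact ⟨⟨hlt.ne', hstep⟩, hchain⟩

private lemma walkIndices_finite (hC : LadderSystem C) {ξ η : Ordinal} {l : List Ordinal}
    (hη : η.card ≤ Cardinal.aleph0) (hw : IsWalk C ξ η l) : (WalkIndices C l).Finite := by
  have hsub : WalkIndices C l ⊆ ⋃ i ∈ Set.Iio l.length,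
      {m | ∃ a b : Ordinal, l[i]? = some a ∧ l[i + 1]? = some b ∧ Order.IsSuccLimit a ∧ b = C a m} := by
    rintro m ⟨i, a, b, hia, hib, hal, hbm⟩
    have hi : i < l.length := by
      have := (List.getElem?_eq_some_iff.mp hib).1; omega
    exact Set.mem_biUnion hi ⟨a, b, hia, hib, hal, hbm⟩
  refine Set.Finite.subset (Set.Finite.biUnion (Set.finite_Iio _) fun i _ => ?_) hsub
  apply Set.Subsingleton.finite
  rintro m₁ ⟨a, b, hia, hib, hal, hbm⟩ m₂ ⟨a', b', hia', hib', hal', hbm'⟩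
  have ha : a = a' := by rw [hia] at hia'; exact Option.some_inj.mp hia'
  have hb : b = b' := by rw [hib] at hib'; exact Option.some_inj.mp hib'
  rw [← ha] at hbm' hal'
  rw [← hb] at hbm'
  have haη : a ≤ η := chain_le hC l η hη hw.1 hw.2.2 a (List.mem_of_getElem? hia)
  have hacard : a.card ≤ Cardinal.aleph0 := (Ordinal.card_le_card haη).trans hη
  have hmono := (hC a hal hacard).1
  exact hmono.injective (by rw [← hbm, ← hbm'])

/-- If the walk norm is `< n`, every index of the (unique) walk is `< n`. -/
private lemma indices_lt_of_norm_lt (hC : LadderSystem C) {ξ η : Ordinal} {l : List Ordinal}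
    (hη : η.card ≤ Cardinal.aleph0) (hw : IsWalk C ξ η l) {n : ℕ}
    (hn : walkNorm C ξ η < n) : ∀ m ∈ WalkIndices C l, m < n := by
  intro m hm
  have hset : {n | ∃ l' : List Ordinal, IsWalk C ξ η l' ∧ n ∈ WalkIndices C l'}
      = WalkIndices C l := by
    ext j
    constructor
    · rintro ⟨l', hl', hj⟩
      rwa [walk_unique l' l η hl' hw] at hj
    · exact fun hj => ⟨l, hw, hj⟩
  have hfin : (WalkIndices C l).Finite := walkIndices_finite hC hη hw
  have : m ≤ walkNorm C ξ η := by
    unfold walkNorm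
    rw [hset]
    exact le_csSup hfin.bddAbove hm
  omega

/-- The set of `ξ ≤ η` reachable by a walk all of whose indices are `< n`. -/
private def goodSet (C : Ordinal → ℕ → Ordinal) (n : ℕ) (η : Ordinal) : Set Ordinal :=
  {ξ | ξ ≤ η ∧ ∃ l, IsWalk C ξ η l ∧ ∀ m ∈ WalkIndices C l, m < n}

private lemma goodSet_finite (hC : LadderSystem C) (n : ℕ) :
    ∀ η : Ordinal, η.card ≤ Cardinal.aleph0 → (goodSet C n η).Finite := by
  intro η
  induction η using Ordinal.induction with
  | h η IH =>
    intro hη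
    have hsub : goodSet C n η ⊆ {η} ∪
        ⋃ b ∈ {b | b < η ∧ ((¬ Order.IsSuccLimit η ∧ b + 1 = η) ∨ ∃ m < n, b = C η m)},
          goodSet C n b := by
      rintro ξ ⟨hξη, l, hw, hind⟩
      obtain ⟨hhead, hlast, hchain⟩ := hw
      cases l with
      | nil => simp at hhead
      | cons x t =>
        have hx : x = η := by simpa using hhead
        rw [hx] at hlast hchain
        cases t with
        | nil =>
          left
          have : η = ξ := by simpa using hlast
          simp [this.symm]
        | cons b t' =>
          right
          have hc := hchain; simp only [List.Chain', List.isChain_cons_cons] at hc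
          have hstep := hc.1.2
          have hbη : b < η := walkStep_lt hC hη hstep
          have hξb : ξ ≤ b := by
            rcases hstep with ⟨_, hb1⟩ | ⟨_, m, hbm, hm1, _⟩
            · have hlt : ξ < η := lt_of_le_of_ne hξη (fun h => hc.1.1 h.symm)
              rw [← hb1, Ordinal.add_one_eq_succ, Order.lt_succ_iff] at hlt
              exact hlt
            · rw [hbm]; exact hm1
          have hindx : ∀ m ∈ WalkIndices C (η :: b :: t'), m < n := by
            intro m hm
            apply hind
            rw [hx]
            exact hm
          have hbmem : b ∈ {b | b < η ∧ ((¬ Order.IsSuccLimit η ∧ b + 1 = η) ∨ ∃ m < n, b = C η m)} := by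
            refine ⟨hbη, ?_⟩
            rcases hstep with ⟨hnl, hb1⟩ | ⟨hl, m, hbm, _, _⟩
            · exact Or.inl ⟨hnl, hb1⟩
            · refine Or.inr ⟨m, ?_, hbm⟩
              exact hindx m ⟨0, η, b, rfl, by simp, hl, hbm⟩
          refine Set.mem_biUnion hbmem ⟨hξb, b :: t', walk_tail ⟨rfl, hlast, hchain⟩, ?_⟩
          rintro m ⟨i, a, b', hia, hib, hal, hbm⟩
          exact hindx m ⟨i + 1, a, b', by simpa using hia, by simpa using hib, hal, hbm⟩
    refine Set.Finite.subset ?_ hsub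
    refine (Set.finite_singleton η).union (Set.Finite.biUnion ?_ ?_)
    · have hss : {b | b < η ∧ ((¬ Order.IsSuccLimit η ∧ b + 1 = η) ∨ ∃ m < n, b = C η m)} ⊆
          {b | b + 1 = η} ∪ (C η '' Set.Iio n) := by
        rintro b ⟨_, ⟨_, hb⟩ | ⟨m, hm, hb⟩⟩
        · exact Or.inl hb
        · exact Or.inr ⟨m, hm, hb.symm⟩
      refine Set.Finite.subset (Set.Finite.union ?_ ((Set.finite_Iio n).image _)) hss
      apply Set.Subsingleton.finite
      rintro b₁ hb₁ b₂ hb₂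
      exact add_one_cancel (hb₁.trans hb₂.symm)
    · rintro b ⟨hbη, _⟩
      exact IH b hbη ((Ordinal.card_le_card hbη.le).trans hη)

end Aux

/-- For each `k`, the set of `ξ ∈ [C γ (k-1), C γ k)` (with `C γ (-1) := 0`)
such that the walk from `C γ k` to `ξ` has norm `< f k` is finite. -/
theorem dSet_finite_on_interval
    (C : Ordinal → ℕ → Ordinal) (hC : LadderSystem C)
    (γ : Ordinal) (hlim : Order.IsSuccLimit γ) (hcount : γ.card ≤ Cardinal.aleph0)
    (f : ℕ → ℕ) (k : ℕ) :
    {ξ : Ordinal | (if k = 0 then (0 : Ordinal) else C γ (k - 1)) ≤ ξ ∧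
      ξ < C γ k ∧ walkNorm C ξ (C γ k) < f k}.Finite := by
  obtain ⟨hmono, hlt, hcof⟩ := hC γ hlim hcount
  have hη : (C γ k).card ≤ Cardinal.aleph0 :=
    (Ordinal.card_le_card (hlt k).le).trans hcount
  refine Set.Finite.subset (goodSet_finite hC (f k) (C γ k) hη) ?_
  rintro ξ ⟨-, hξlt, hnorm⟩
  obtain ⟨l, hl⟩ := walk_exists hC (C γ k) hη hξlt.le
  exact ⟨hξlt.le, l, hl, indices_lt_of_norm_lt hC hη hl hnorm⟩
end

section
/- Let β be a limit ordinal. If γ_0 < γ_1 < … with sup_n γ_n = β, and for each n, e_n ⊆ γ_n is closed in γ_n of order type γ_n and e_{n+1} ∩ γ_n = e_n, then e = ⋃_n e_n is a closed subset of β of order type β. -/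
open Ordinal

lemma otype_mono {s t : Set Ordinal.{u}} (h : s ⊆ t) : otype s ≤ otype t := by
  have f : Subrel ((· < ·) : Ordinal.{u} → Ordinal.{u} → Prop) (· ∈ s) ↪r
      Subrel ((· < ·) : Ordinal.{u} → Ordinal.{u} → Prop) (· ∈ t) :=
    ⟨⟨Set.inclusion h, Set.inclusion_injective h⟩, Iff.rfl⟩
  exact f.ordinal_type_le

lemma otype_Iio (β : Ordinal.{u}) : otype (Set.Iio β) = Ordinal.lift.{u+1} β :=
  type_lt_Iio β

/-- Coherent unions: if `γ 0 < γ 1 < …` with supremum `β`, and for each `n`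
the set `e n ⊆ γ n` is closed in `γ n` of order type `γ n`, coherently, i.e.
`e (n+1) ∩ γ n = e n`, then `⋃ n, e n` is a closed subset of `β` of order
type `β`. -/
theorem coherent_union_club
    (β : Ordinal) (hβ : Order.IsSuccLimit β)
    (γ : ℕ → Ordinal) (hγmono : StrictMono γ)
    (hγlt : ∀ n, γ n < β) (hγcof : ∀ ξ < β, ∃ n, ξ < γ n)
    (e : ℕ → Set Ordinal)
    (hsub : ∀ n, ∀ x ∈ e n, x < γ n)
    (hclosed : ∀ n, ClosedIn (e n) (γ n))
    (hot : ∀ n, HasOrderType (e n) (γ n))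
    (hcoh : ∀ n, e (n + 1) ∩ Set.Iio (γ n) = e n) :
    ClosedIn (⋃ n, e n) β ∧ HasOrderType (⋃ n, e n) β := by
  -- monotonicity of the chain
  have hmono : ∀ n m, n ≤ m → e n ⊆ e m := by
    intro n m hnm
    induction m with
    | zero => simp_all
    | succ m ih =>
      rcases Nat.lt_or_ge n (m + 1) with h | h
      · intro x hx
        have hx' : x ∈ e m := ih (Nat.lt_succ_iff.mp h) hx
        have := (hcoh m) ▸ (Set.mem_inter_iff x _ _)
        rw [← hcoh m] at hx'
        exact hx'.1
      · have : n = m + 1 := le_antisymm hnm h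
        subst this; exact fun x hx => hx
  -- restriction: for n ≤ m, e m ∩ Iio (γ n) = e n
  have hrestr : ∀ n m, n ≤ m → e m ∩ Set.Iio (γ n) = e n := by
    intro n m hnm
    induction m with
    | zero =>
      have : n = 0 := Nat.le_zero.mp hnm
      subst this
      ext x; constructor
      · exact fun hx => hx.1
      · exact fun hx => ⟨hx, hsub 0 x hx⟩
    | succ m ih =>
      rcases Nat.lt_or_ge n (m + 1) with h | h
      · have hnm' : n ≤ m := Nat.lt_succ_iff.mp h
        calc e (m + 1) ∩ Set.Iio (γ n)
            = (e (m + 1) ∩ Set.Iio (γ m)) ∩ Set.Iio (γ n) := by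
              rw [Set.inter_assoc]
              congr 1
              exact (Set.inter_eq_self_of_subset_right
                (Set.Iio_subset_Iio (hγmono.monotone hnm'))).symm
          _ = e m ∩ Set.Iio (γ n) := by rw [hcoh m]
          _ = e n := ih hnm'
      · have : n = m + 1 := le_antisymm hnm h
        subst this
        ext x; constructor
        · exact fun hx => hx.1
        · exact fun hx => ⟨hx, hsub _ x hx⟩
  constructor
  · -- closedness
    intro lam hlam hlim hunb
    obtain ⟨n, hn⟩ := hγcof lam hlam
    have hmem : lam ∈ e n := by
      apply hclosed n lam hn hlim
      intro ξ hξ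
      obtain ⟨x, hx, hξx, hxlam⟩ := hunb ξ hξ
      obtain ⟨m, hm⟩ := Set.mem_iUnion.mp hx
      refine ⟨x, ?_, hξx, hxlam⟩
      rcases le_or_gt m n with h | h
      · exact hmono m n h hm
      · have : x ∈ e m ∩ Set.Iio (γ n) := ⟨hm, lt_trans hxlam hn⟩
        rw [hrestr n m (le_of_lt h)] at this
        exact this
    exact Set.mem_iUnion.mpr ⟨n, hmem⟩
  · -- order type
    apply le_antisymm
    · have hsub' : (⋃ n, e n) ⊆ Set.Iio β := by
        intro x hx
        obtain ⟨m, hm⟩ := Set.mem_iUnion.mp hx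
        exact lt_trans (hsub m x hm) (hγlt m)
      exact (otype_mono hsub').trans_eq (otype_Iio β)
    · refine le_of_forall_lt fun c hc => ?_
      obtain ⟨ξ, hξ, rfl⟩ := Ordinal.lt_lift_iff.mp hc
      obtain ⟨n, hn⟩ := hγcof ξ hξ
      refine lt_of_lt_of_le (Ordinal.lift_lt.mpr hn) ?_
      rw [← hot n]
      exact otype_mono (Set.subset_iUnion e n)
end
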